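/- arXiv:2111.14497 — 4 statements merged into one kernel-verified Lean document; each statement's English description precedes it below -/
import Mathlib

section
/- Let A be a finite set and ρ = ⊗_{i∈ℤ} ρ_i a product probability measure on A^ℤ, nonsingular for the left shift and satisfying the Doeblin condition. Let k ∈ ℤ⁺, let p be a probability measure on A of denominator k (i.e. k·p(a) ∈ ℕ for all a∈A), let V ⊆ type_k(p) be nonempty, and let F ⊆ V. Then ∑_{i∈ℤ} ( ρ_i^{⊕k}(F | V) − #F/#V )² < ∞, where ρ_i^{⊕k}(·|V) is the measure (ρ_i, …, ρ_{i+k−1}) on A^k conditioned on V. -/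
open MeasureTheory Filter Set Topology

/-- The cylinder set of points agreeing with `y` on the finite coordinate set `s`. -/
def cylinder {A : Type*} (s : Finset ℤ) (y : ℤ → A) : Set (ℤ → A) :=
  {x | ∀ i ∈ s, x i = y i}

/-- `μ` is the product measure on `A^ℤ` with marginals `ρ i`. -/
def IsProductMeasure {A : Type*} [MeasurableSpace A]
    (μ : Measure (ℤ → A)) (ρ : ℤ → A → ℝ) : Prop :=
  ∀ (s : Finset ℤ) (y : ℤ → A), μ (cylinder s y) = ∏ i ∈ s, ENNReal.ofReal (ρ i (y i))

/-- The left shift on `A^ℤ`. -/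
def shift {A : Type*} : (ℤ → A) → (ℤ → A) := fun x i => x (i + 1)

/-- Two measures are equivalent if they have the same null sets. -/
def MeasEquiv {X : Type*} [MeasurableSpace X] (μ ν : Measure X) : Prop :=
  μ ≪ ν ∧ ν ≪ μ

/-- `p` is a probability vector. -/
def IsProbVec {A : Type*} [Fintype A] (p : A → ℝ) : Prop :=
  (∀ a, 0 ≤ p a) ∧ ∑ a, p a = 1

/-- `ρ_i^{⊕k}(c) = ∏_{j<k} ρ_{i+j}(c_j)`. -/
noncomputable def blockProb {A : Type*} [Fintype A] (ρ : ℤ → A → ℝ) (i : ℤ) {k : ℕ}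
    (c : Fin k → A) : ℝ :=
  ∏ j : Fin k, ρ (i + (j.val : ℤ)) (c j)

/-- `ρ_i^{⊕k}(V)` for `V ⊆ A^k`. -/
noncomputable def blockProbSet {A : Type*} [Fintype A] (ρ : ℤ → A → ℝ) (i : ℤ) {k : ℕ}
    (V : Set (Fin k → A)) : ℝ :=
  ∑ c, V.indicator (fun c => blockProb ρ i c) c

/-- The empirical measure of a word `x ∈ A^k`. -/
noncomputable def emp {A : Type*} [Fintype A] [DecidableEq A] {k : ℕ} (x : Fin k → A) (a : A) : ℝ :=
  ((Finset.univ.filter fun j => x j = a).card : ℝ) / k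

lemma abs_prod_sub_prod_le_sum {ι : Type*} (s : Finset ι) (f g : ι → ℝ)
    (h : ∀ j ∈ s, 0 ≤ f j ∧ f j ≤ 1 ∧ 0 ≤ g j ∧ g j ≤ 1) :
    |∏ j ∈ s, f j - ∏ j ∈ s, g j| ≤ ∑ j ∈ s, |f j - g j| := by
  classical
  induction s using Finset.cons_induction with
  | empty => simp
  | cons a s ha ih =>
    simp only [Finset.prod_cons, Finset.sum_cons]
    have h' : ∀ j ∈ s, 0 ≤ f j ∧ f j ≤ 1 ∧ 0 ≤ g j ∧ g j ≤ 1 :=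
      fun j hj => h j (Finset.mem_cons_of_mem hj)
    have ha' := h a (Finset.mem_cons_self a s)
    have hPg0 : 0 ≤ ∏ j ∈ s, g j := Finset.prod_nonneg fun j hj => (h' j hj).2.2.1
    have hPg1 : ∏ j ∈ s, g j ≤ 1 :=
      Finset.prod_le_one (fun j hj => (h' j hj).2.2.1) (fun j hj => (h' j hj).2.2.2)
    have ihs := ih h'
    have e : f a * ∏ j ∈ s, f j - g a * ∏ j ∈ s, g j
        = f a * (∏ j ∈ s, f j - ∏ j ∈ s, g j) + (f a - g a) * ∏ j ∈ s, g j := by ring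
    rw [e]
    calc |f a * (∏ j ∈ s, f j - ∏ j ∈ s, g j) + (f a - g a) * ∏ j ∈ s, g j|
        ≤ |f a * (∏ j ∈ s, f j - ∏ j ∈ s, g j)| + |(f a - g a) * ∏ j ∈ s, g j| := abs_add_le _ _
      _ = |f a| * |∏ j ∈ s, f j - ∏ j ∈ s, g j| + |f a - g a| * |∏ j ∈ s, g j| := by
          rw [abs_mul, abs_mul]
      _ ≤ 1 * (∑ j ∈ s, |f j - g j|) + |f a - g a| * 1 := by
          have h1 : |f a| ≤ 1 := abs_le.mpr ⟨by linarith [ha'.1], ha'.2.1⟩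
          have h2 : |∏ j ∈ s, g j| ≤ 1 := abs_le.mpr ⟨by linarith, hPg1⟩
          have := abs_nonneg (f a - g a)
          have := abs_nonneg (∏ j ∈ s, f j - ∏ j ∈ s, g j)
          have := abs_nonneg (f a)
          nlinarith
      _ = |f a - g a| + ∑ j ∈ s, |f j - g j| := by ring

lemma cylinder_measurableSet {A : Type*} [MeasurableSpace A] [MeasurableSingletonClass A]
    (s : Finset ℤ) (y : ℤ → A) : MeasurableSet (cylinder s y) := by
  have : _root_.cylinder s y = ⋂ i ∈ (s : Set ℤ), (fun x : ℤ → A => x i) ⁻¹' {y i} := by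
    ext x; simp [_root_.cylinder]
  rw [this]
  exact MeasurableSet.biInter (s : Set ℤ).to_countable
    fun i _ => (measurable_pi_apply i) (measurableSet_singleton _)

lemma measurable_shift {A : Type*} [MeasurableSpace A] : Measurable (shift (A := A)) :=
  measurable_pi_lambda _ fun i => measurable_pi_apply (i + 1)

lemma shift_preimage_cylinder {A : Type*} (s : Finset ℤ) (y : ℤ → A) :
    shift ⁻¹' _root_.cylinder s y = _root_.cylinder (s.image (· + 1)) (fun i => y (i - 1)) := by
  ext x
  simp only [_root_.cylinder, Set.mem_preimage, Set.mem_setOf_eq, shift]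
  constructor
  · intro h i hi
    rw [Finset.mem_image] at hi
    obtain ⟨j, hj, rfl⟩ := hi
    simpa using h j hj
  · intro h i hi
    simpa using h (i + 1) (Finset.mem_image.mpr ⟨i, hi, rfl⟩)

lemma kakutani_summable {A : Type*} [Fintype A] [MeasurableSpace A] [MeasurableSingletonClass A]
    (ρ : ℤ → A → ℝ) (hρ : ∀ i, IsProbVec (ρ i))
    (μ : Measure (ℤ → A)) (hprod : IsProductMeasure μ ρ)
    (hns : MeasEquiv (μ.map shift) μ)
    (hdoeblin : ∃ δ > 0, ∀ (i : ℤ) (b : A), δ < ρ i b) :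
    Summable (fun i : ℤ => 1 - ∑ a, Real.sqrt (ρ i a * ρ (i + 1) a)) := by
  classical
  obtain ⟨δ, hδ0, hδ⟩ := hdoeblin
  set α : ℤ → ℝ := fun i => ∑ a, Real.sqrt (ρ i a * ρ (i + 1) a) with hα
  have hρ0 : ∀ i a, 0 ≤ ρ i a := fun i a => (hρ i).1 a
  have hAne : Nonempty A := by
    by_contra h
    rw [not_nonempty_iff] at h
    have := (hρ 0).2
    rw [Finset.univ_eq_empty, Finset.sum_empty] at this
    norm_num at this
  obtain ⟨a₀⟩ := hAne
  have hαpos : ∀ i, 0 < α i := by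
    intro i
    have h1 : 0 < Real.sqrt (ρ i a₀ * ρ (i + 1) a₀) :=
      Real.sqrt_pos.mpr (mul_pos (lt_trans hδ0 (hδ i a₀)) (lt_trans hδ0 (hδ (i+1) a₀)))
    exact lt_of_lt_of_le h1 (Finset.single_le_sum
      (f := fun a => Real.sqrt (ρ i a * ρ (i + 1) a))
      (fun a _ => Real.sqrt_nonneg _) (Finset.mem_univ a₀))
  have hαle : ∀ i, α i ≤ 1 := by
    intro i
    have hb : ∀ a ∈ Finset.univ, Real.sqrt (ρ i a * ρ (i + 1) a)
        ≤ (ρ i a + ρ (i + 1) a) / 2 := by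
      intro a _
      have h1 : ρ i a * ρ (i+1) a ≤ ((ρ i a + ρ (i+1) a)/2)^2 := by nlinarith [sq_nonneg (ρ i a - ρ (i+1) a)]
      calc Real.sqrt (ρ i a * ρ (i + 1) a) ≤ Real.sqrt (((ρ i a + ρ (i+1) a)/2)^2) :=
            Real.sqrt_le_sqrt h1
        _ = (ρ i a + ρ (i+1) a)/2 := Real.sqrt_sq (by linarith [hρ0 i a, hρ0 (i+1) a])
    calc α i ≤ ∑ a, (ρ i a + ρ (i + 1) a) / 2 := Finset.sum_le_sum hb
      _ = 1 := by
          rw [← Finset.sum_div, Finset.sum_add_distrib, (hρ i).2, (hρ (i+1)).2]; norm_num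
  have hkey : ∃ ε > 0, ∀ s : Finset ℤ, ε ≤ ∏ i ∈ s, α i := by
    by_contra hcon
    push_neg at hcon
    have hμuniv : μ Set.univ = 1 := by
      have h := hprod ∅ (fun _ => a₀)
      have huniv : _root_.cylinder (∅ : Finset ℤ) (fun _ => a₀) = (Set.univ : Set (ℤ → A)) := by
        ext x; simp [_root_.cylinder]
      rw [huniv] at h
      simpa using h
    set ν := μ.map shift with hν
    have hB : ∀ n : ℕ, ∃ B : Set (ℤ → A),
        μ B ≤ ENNReal.ofReal ((1/2 : ℝ)^n) ∧ ν Bᶜ ≤ ENNReal.ofReal ((1/2 : ℝ)^n) := by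
      intro n
      obtain ⟨s, hs⟩ := hcon ((1/2 : ℝ)^n) (by positivity)
      set ext : (↥s → A) → (ℤ → A) := fun z i => if h : i ∈ s then z ⟨i, h⟩ else a₀ with hext
      set P : (↥s → A) → ℝ := fun z => ∏ i ∈ s, ρ i (ext z i) with hP
      set Q : (↥s → A) → ℝ := fun z => ∏ i ∈ s, ρ (i + 1) (ext z i) with hQ
      have hP0 : ∀ z, 0 ≤ P z := fun z => Finset.prod_nonneg fun i _ => hρ0 _ _
      have hQ0 : ∀ z, 0 ≤ Q z := fun z => Finset.prod_nonneg fun i _ => hρ0 _ _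
      have hμE : ∀ z, μ (_root_.cylinder s (ext z)) = ENNReal.ofReal (P z) := by
        intro z
        rw [hprod s (ext z), ← ENNReal.ofReal_prod_of_nonneg (fun i _ => hρ0 i _)]
      have hνE : ∀ z, ν (_root_.cylinder s (ext z)) = ENNReal.ofReal (Q z) := by
        intro z
        rw [hν, Measure.map_apply measurable_shift (cylinder_measurableSet s _),
          shift_preimage_cylinder, hprod,
          Finset.prod_image (by intro a _ b _ h; have h' : a + 1 = b + 1 := h; omega)]
        rw [← ENNReal.ofReal_prod_of_nonneg (fun i _ => hρ0 _ _)]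
        congr 1
        apply Finset.prod_congr rfl
        intro i hi
        norm_num
      have hextz : ∀ (z : ↥s → A) (i : ↥s), ext z ↑i = z i := by
        intro z i
        simp [hext, i.2]
      have hPz : ∀ z, P z = ∏ i : ↥s, ρ i (z i) := by
        intro z
        simp only [hP]
        rw [← Finset.prod_coe_sort s]
        exact Finset.prod_congr rfl fun i _ => by rw [hextz]
      have hQz : ∀ z, Q z = ∏ i : ↥s, ρ ((i : ℤ) + 1) (z i) := by
        intro z
        simp only [hQ]
        rw [← Finset.prod_coe_sort s]
        exact Finset.prod_congr rfl fun i _ => by rw [hextz]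
      have hmin : ∀ z, min (P z) (Q z)
          ≤ ∏ i : ↥s, Real.sqrt (ρ i (z i) * ρ ((i : ℤ) + 1) (z i)) := by
        intro z
        have hprodsqrt : ∏ i : ↥s, Real.sqrt (ρ i (z i) * ρ ((i : ℤ) + 1) (z i))
            = (∏ i : ↥s, Real.sqrt (ρ i (z i))) * ∏ i : ↥s, Real.sqrt (ρ ((i : ℤ) + 1) (z i)) := by
          rw [← Finset.prod_mul_distrib]
          exact Finset.prod_congr rfl fun i _ => Real.sqrt_mul (hρ0 _ _) _
        set u := ∏ i : ↥s, Real.sqrt (ρ i (z i)) with hu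
        set v := ∏ i : ↥s, Real.sqrt (ρ ((i : ℤ) + 1) (z i)) with hv
        have hu0 : 0 ≤ u := Finset.prod_nonneg fun _ _ => Real.sqrt_nonneg _
        have hv0 : 0 ≤ v := Finset.prod_nonneg fun _ _ => Real.sqrt_nonneg _
        have huP : u ^ 2 = P z := by
          rw [hu, ← Finset.prod_pow, hPz]
          exact Finset.prod_congr rfl fun i _ => Real.sq_sqrt (hρ0 _ _)
        have hvQ : v ^ 2 = Q z := by
          rw [hv, ← Finset.prod_pow, hQz]
          exact Finset.prod_congr rfl fun i _ => Real.sq_sqrt (hρ0 _ _)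
        rw [hprodsqrt]
        rcases le_total u v with h | h
        · calc min (P z) (Q z) ≤ P z := min_le_left _ _
            _ = u * u := by rw [← huP]; ring
            _ ≤ u * v := mul_le_mul_of_nonneg_left h hu0
        · calc min (P z) (Q z) ≤ Q z := min_le_right _ _
            _ = v * v := by rw [← hvQ]; ring
            _ ≤ u * v := mul_le_mul_of_nonneg_right h hv0
      have hsum : ∑ z : ↥s → A, ∏ i : ↥s, Real.sqrt (ρ i (z i) * ρ ((i : ℤ) + 1) (z i))
          = ∏ i ∈ s, α i := by
        have h1 := Finset.prod_univ_sum (fun _ : ↥s => (Finset.univ : Finset A))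
          (fun i a => Real.sqrt (ρ i a * ρ ((i : ℤ) + 1) a))
        rw [Fintype.piFinset_univ] at h1
        rw [← h1, ← Finset.prod_coe_sort s]
      have hminsum : ∑ z : ↥s → A, min (P z) (Q z) ≤ (1/2 : ℝ)^n := by
        calc ∑ z : ↥s → A, min (P z) (Q z)
            ≤ ∑ z : ↥s → A, ∏ i : ↥s, Real.sqrt (ρ i (z i) * ρ ((i : ℤ) + 1) (z i)) :=
              Finset.sum_le_sum fun z _ => hmin z
          _ = ∏ i ∈ s, α i := hsum
          _ ≤ (1/2 : ℝ)^n := le_of_lt hs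
      set S : Finset (↥s → A) := Finset.univ.filter (fun z => P z ≤ Q z) with hS
      refine ⟨⋃ z ∈ S, _root_.cylinder s (ext z), ?_, ?_⟩
      · calc μ (⋃ z ∈ S, _root_.cylinder s (ext z)) ≤ ∑ z ∈ S, μ (_root_.cylinder s (ext z)) :=
            measure_biUnion_finset_le S _
          _ = ENNReal.ofReal (∑ z ∈ S, P z) := by
              rw [ENNReal.ofReal_sum_of_nonneg (fun z _ => hP0 z)]
              exact Finset.sum_congr rfl fun z _ => hμE z
          _ ≤ ENNReal.ofReal ((1/2 : ℝ)^n) := by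
              apply ENNReal.ofReal_le_ofReal
              calc ∑ z ∈ S, P z = ∑ z ∈ S, min (P z) (Q z) :=
                    Finset.sum_congr rfl fun z hz =>
                      (min_eq_left (Finset.mem_filter.mp hz).2).symm
                _ ≤ ∑ z : ↥s → A, min (P z) (Q z) :=
                    Finset.sum_le_sum_of_subset_of_nonneg (Finset.subset_univ S)
                      (fun z _ _ => le_min (hP0 z) (hQ0 z))
                _ ≤ (1/2 : ℝ)^n := hminsum
      · have hcover : (⋃ z ∈ S, _root_.cylinder s (ext z))ᶜ
            ⊆ ⋃ z ∈ (Finset.univ.filter (fun z => ¬ P z ≤ Q z)), _root_.cylinder s (ext z) := by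
          intro x hx
          have hxz : x ∈ _root_.cylinder s (ext (fun i : ↥s => x i)) := by
            intro i hi
            simp [hext, hi]
          by_cases hzS : (fun i : ↥s => x i) ∈ S
          · exact absurd (Set.mem_iUnion₂.mpr ⟨_, hzS, hxz⟩) hx
          · exact Set.mem_iUnion₂.mpr ⟨(fun i : ↥s => x i),
              by simpa [hS, Finset.mem_filter] using hzS, hxz⟩
        calc ν (⋃ z ∈ S, _root_.cylinder s (ext z))ᶜ
            ≤ ν (⋃ z ∈ (Finset.univ.filter (fun z => ¬ P z ≤ Q z)), _root_.cylinder s (ext z)) :=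
              measure_mono hcover
          _ ≤ ∑ z ∈ (Finset.univ.filter (fun z => ¬ P z ≤ Q z)), ν (_root_.cylinder s (ext z)) :=
              measure_biUnion_finset_le _ _
          _ = ENNReal.ofReal (∑ z ∈ (Finset.univ.filter (fun z => ¬ P z ≤ Q z)), Q z) := by
              rw [ENNReal.ofReal_sum_of_nonneg (fun z _ => hQ0 z)]
              exact Finset.sum_congr rfl fun z _ => hνE z
          _ ≤ ENNReal.ofReal ((1/2 : ℝ)^n) := by
              apply ENNReal.ofReal_le_ofReal
              calc ∑ z ∈ (Finset.univ.filter (fun z => ¬ P z ≤ Q z)), Q z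
                  = ∑ z ∈ (Finset.univ.filter (fun z => ¬ P z ≤ Q z)), min (P z) (Q z) :=
                    Finset.sum_congr rfl fun z hz =>
                      (min_eq_right (le_of_lt (not_le.mp (Finset.mem_filter.mp hz).2))).symm
                _ ≤ ∑ z : ↥s → A, min (P z) (Q z) :=
                    Finset.sum_le_sum_of_subset_of_nonneg (Finset.subset_univ _)
                      (fun z _ _ => le_min (hP0 z) (hQ0 z))
                _ ≤ (1/2 : ℝ)^n := hminsum
    choose B hB1 hB2 using hB
    have hμlimsup : μ (limsup B atTop) = 0 := by
      apply measure_limsup_atTop_eq_zero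
      have h1 : ∑' n, μ (B n) ≤ ∑' n : ℕ, ENNReal.ofReal ((1/2 : ℝ)^n) :=
        ENNReal.tsum_le_tsum hB1
      have h2 : ∑' n : ℕ, ENNReal.ofReal ((1/2 : ℝ)^n) ≠ ⊤ := by
        rw [← ENNReal.ofReal_tsum_of_nonneg (fun n => by positivity) summable_geometric_two]
        exact ENNReal.ofReal_ne_top
      exact ne_top_of_le_ne_top h2 h1
    have hνcompl : ν (limsup B atTop)ᶜ = 0 := by
      have hrw : (limsup B atTop)ᶜ = ⋃ N : ℕ, ⋂ n, ⋂ (_ : n ≥ N), (B n)ᶜ := by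
        rw [limsup_eq_iInf_iSup_of_nat]
        simp only [iInf_eq_iInter, iSup_eq_iUnion, Set.compl_iInter, Set.compl_iUnion]
      have h0 : ∀ N : ℕ, ν (⋂ n, ⋂ (_ : n ≥ N), (B n)ᶜ) = 0 := by
        intro N
        have hle : ∀ᶠ m in atTop, ν (⋂ n, ⋂ (_ : n ≥ N), (B n)ᶜ) ≤ ENNReal.ofReal ((1/2 : ℝ)^m) := by
          filter_upwards [eventually_ge_atTop N] with m hm
          refine le_trans (measure_mono ?_) (hB2 m)
          exact Set.iInter₂_subset m hm
        have htend : Tendsto (fun m : ℕ => ENNReal.ofReal ((1/2 : ℝ)^m)) atTop (𝓝 0) := by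
          have := tendsto_pow_atTop_nhds_zero_of_lt_one (by norm_num : (0:ℝ) ≤ 1/2)
            (by norm_num : (1/2 : ℝ) < 1)
          have := (ENNReal.continuous_ofReal.tendsto 0).comp this
          rw [ENNReal.ofReal_zero] at this
          exact this
        exact le_zero_iff.mp (ge_of_tendsto htend hle)
      rw [hrw]
      refine le_zero_iff.mp (le_trans (measure_iUnion_le _) ?_)
      simp [h0]
    have hμcompl : μ ((limsup B atTop)ᶜ) = 0 := hns.2 hνcompl
    have : (1 : ENNReal) ≤ 0 := by
      calc (1 : ENNReal) = μ Set.univ := hμuniv.symm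
        _ = μ ((limsup B atTop) ∪ (limsup B atTop)ᶜ) := by rw [Set.union_compl_self]
        _ ≤ μ (limsup B atTop) + μ ((limsup B atTop)ᶜ) := measure_union_le _ _
        _ = 0 := by rw [hμlimsup, hμcompl, add_zero]
    simp at this
  obtain ⟨ε, hε0, hε⟩ := hkey
  refine summable_of_sum_le (f := fun i : ℤ => 1 - α i) (c := -Real.log ε) (fun i => ?_) (fun u => ?_)
  · simp only [Pi.zero_apply]
    linarith [hαle i]
  · calc ∑ i ∈ u, (1 - α i) ≤ ∑ i ∈ u, (-Real.log (α i)) := by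
          apply Finset.sum_le_sum
          intro i _
          linarith [Real.log_le_sub_one_of_pos (hαpos i)]
      _ = -Real.log (∏ i ∈ u, α i) := by
          rw [Real.log_prod (s := u) (f := α) (fun i _ => (hαpos i).ne'), ← Finset.sum_neg_distrib]
      _ ≤ -Real.log ε := by
          have := Real.log_le_log hε0 (hε u)
          linarith

set_option maxHeartbeats 1000000 in
/-- For a nonsingular Doeblin Bernoulli shift, a denominator-`k` probability vector `p`,
`V` a nonempty subset of the type class of `p` and `F ⊆ V`, the conditional block
probabilities `ρ_i^{⊕k}(F|V)` are square-summably close to `#F/#V`. -/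
theorem type_class_conditional_summable {A : Type*} [Fintype A] [DecidableEq A]
    [MeasurableSpace A] [MeasurableSingletonClass A]
    (ρ : ℤ → A → ℝ) (hρ : ∀ i, IsProbVec (ρ i))
    (μ : Measure (ℤ → A)) (hprod : IsProductMeasure μ ρ)
    (hns : MeasEquiv (μ.map shift) μ)
    (hdoeblin : ∃ δ > 0, ∀ (i : ℤ) (b : A), δ < ρ i b)
    (k : ℕ) (hk : 0 < k)
    (p : A → ℝ) (hp : IsProbVec p) (hden : ∀ a, ∃ n : ℕ, p a = (n : ℝ) / k)
    (V : Set (Fin k → A)) (hV : V ⊆ {x | ∀ a, emp x a = p a}) (hVne : V.Nonempty)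
    (F : Set (Fin k → A)) (hF : F ⊆ V) :
    Summable (fun i : ℤ =>
      (blockProbSet ρ i F / blockProbSet ρ i V - (F.ncard : ℝ) / (V.ncard : ℝ)) ^ 2) := by
  classical
  obtain ⟨δ, hδ0, hδ⟩ := hdoeblin
  have hρ0 : ∀ i a, 0 ≤ ρ i a := fun i a => (hρ i).1 a
  have hρ1 : ∀ i a, ρ i a ≤ 1 := by
    intro i a
    calc ρ i a ≤ ∑ b, ρ i b :=
          Finset.single_le_sum (fun b _ => hρ0 i b) (Finset.mem_univ a)
      _ = 1 := (hρ i).2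
  have hKak := kakutani_summable ρ hρ μ hprod hns ⟨δ, hδ0, hδ⟩
  set g : ℤ → ℝ := fun m => ∑ a, (ρ m a - ρ (m + 1) a) ^ 2 with hgdef
  have hg0 : ∀ m, 0 ≤ g m := fun m => Finset.sum_nonneg fun a _ => sq_nonneg _
  have hgsum : Summable g := by
    apply Summable.of_nonneg_of_le hg0 ?_ (hKak.mul_left 8)
    intro m
    have hterm : ∀ a : A, (ρ m a - ρ (m + 1) a) ^ 2
        ≤ 4 * (ρ m a + ρ (m + 1) a - 2 * Real.sqrt (ρ m a * ρ (m + 1) a)) := by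
      intro a
      have hx := hρ0 m a; have hy := hρ0 (m + 1) a
      have hx1 := hρ1 m a; have hy1 := hρ1 (m + 1) a
      have hsq : Real.sqrt (ρ m a * ρ (m + 1) a)
          = Real.sqrt (ρ m a) * Real.sqrt (ρ (m + 1) a) := Real.sqrt_mul hx _
      have h1 : Real.sqrt (ρ m a) ^ 2 = ρ m a := Real.sq_sqrt hx
      have h2 : Real.sqrt (ρ (m + 1) a) ^ 2 = ρ (m + 1) a := Real.sq_sqrt hy
      have hs1 : Real.sqrt (ρ m a) ≤ 1 := by
        rw [show (1 : ℝ) = Real.sqrt 1 by simp]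
        exact Real.sqrt_le_sqrt hx1
      have hs2 : Real.sqrt (ρ (m + 1) a) ≤ 1 := by
        rw [show (1 : ℝ) = Real.sqrt 1 by simp]
        exact Real.sqrt_le_sqrt hy1
      rw [hsq]
      have hsx := Real.sqrt_nonneg (ρ m a)
      have hsy := Real.sqrt_nonneg (ρ (m + 1) a)
      have h4 : 0 ≤ (Real.sqrt (ρ m a) - Real.sqrt (ρ (m + 1) a)) ^ 2
          * (4 - (Real.sqrt (ρ m a) + Real.sqrt (ρ (m + 1) a)) ^ 2) :=
        mul_nonneg (sq_nonneg _) (by nlinarith)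
      nlinarith [h4, h1, h2]
    calc g m ≤ ∑ a, 4 * (ρ m a + ρ (m + 1) a - 2 * Real.sqrt (ρ m a * ρ (m + 1) a)) :=
          Finset.sum_le_sum fun a _ => hterm a
      _ = 8 * (1 - ∑ a, Real.sqrt (ρ m a * ρ (m + 1) a)) := by
          simp only [mul_sub, mul_add, Finset.sum_sub_distrib, Finset.sum_add_distrib,
            ← Finset.mul_sum]
          rw [(hρ m).2, (hρ (m + 1)).2]
          ring
  set t : ℤ → ℝ := fun i => ∑ m ∈ Finset.range k, Real.sqrt (g (i + m)) with htdef
  set h : ℤ → ℝ := fun i => ∑ m ∈ Finset.range k, g (i + m) with hhdef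
  have hhsum : Summable h := by
    apply summable_sum (s := Finset.range k)
    intro m _
    have he : (fun i : ℤ => g (i + (m : ℤ))) = g ∘ (Equiv.addRight (m : ℤ)) := by
      funext i; simp
    rw [he]
    exact (Equiv.addRight ((m : ℕ) : ℤ)).summable_iff.mpr hgsum
  have ht0 : ∀ i, 0 ≤ t i := fun i => Finset.sum_nonneg fun _ _ => Real.sqrt_nonneg _
  have ht2 : ∀ i, t i ^ 2 ≤ (k : ℝ) * h i := by
    intro i
    calc t i ^ 2 ≤ (Finset.range k).card * ∑ m ∈ Finset.range k, Real.sqrt (g (i + m)) ^ 2 :=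
          sq_sum_le_card_mul_sum_sq
      _ = (k : ℝ) * h i := by
          rw [Finset.card_range]
          congr 1
          exact Finset.sum_congr rfl fun m _ => Real.sq_sqrt (hg0 _)
  have hstep : ∀ (m : ℤ) (a : A), |ρ m a - ρ (m + 1) a| ≤ Real.sqrt (g m) := by
    intro m a
    rw [← Real.sqrt_sq_eq_abs]
    exact Real.sqrt_le_sqrt (Finset.single_le_sum
      (f := fun a => (ρ m a - ρ (m + 1) a) ^ 2) (fun b _ => sq_nonneg _) (Finset.mem_univ a))
  have htel : ∀ (i : ℤ) (n : ℕ), n ≤ k → ∀ a, |ρ (i + n) a - ρ i a| ≤ t i := by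
    intro i n hn a
    have key : ∀ n : ℕ, |ρ (i + n) a - ρ i a| ≤ ∑ m ∈ Finset.range n, Real.sqrt (g (i + m)) := by
      intro n
      induction n with
      | zero => simp
      | succ n ih =>
        have hcast : (i + ((n : ℕ) + 1 : ℕ)) = (i + n) + 1 := by push_cast; ring
        have h1 : |ρ (i + ((n : ℕ) + 1 : ℕ)) a - ρ i a|
            ≤ |ρ (i + ((n : ℕ) + 1 : ℕ)) a - ρ (i + n) a| + |ρ (i + n) a - ρ i a| :=
          abs_sub_le _ _ _
        have h2 : |ρ (i + ((n : ℕ) + 1 : ℕ)) a - ρ (i + n) a| ≤ Real.sqrt (g (i + n)) := by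
          rw [hcast, abs_sub_comm]
          exact hstep (i + n) a
        rw [Finset.sum_range_succ]
        calc |ρ (i + ((n : ℕ) + 1 : ℕ)) a - ρ i a|
            ≤ Real.sqrt (g (i + n)) + |ρ (i + n) a - ρ i a| := by linarith
          _ ≤ Real.sqrt (g (i + n)) + ∑ m ∈ Finset.range n, Real.sqrt (g (i + m)) := by
              linarith [ih]
          _ = ∑ m ∈ Finset.range n, Real.sqrt (g (i + m)) + Real.sqrt (g (i + n)) := by ring
    calc |ρ (i + n) a - ρ i a| ≤ ∑ m ∈ Finset.range n, Real.sqrt (g (i + m)) := key n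
      _ ≤ t i := Finset.sum_le_sum_of_subset_of_nonneg
          (Finset.range_subset_range.mpr hn) (fun m _ _ => Real.sqrt_nonneg _)
  -- counting facts
  have hcount : ∀ x ∈ V, ∀ a : A, ((Finset.univ.filter fun j => x j = a).card : ℝ) = k * p a := by
    intro x hx a
    have hemp := hV hx a
    rw [emp] at hemp
    field_simp at hemp
    linarith [hemp]
  set N : ℝ := (Fintype.card (Fin k → A) : ℝ) with hN
  set C : ℝ := 2 * N ^ 2 * k / δ ^ k with hC
  have hC0 : 0 ≤ C := by
    apply div_nonneg _ (le_of_lt (pow_pos hδ0 k))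
    positivity
  have hmain : ∀ i : ℤ,
      |blockProbSet ρ i F / blockProbSet ρ i V - (F.ncard : ℝ) / (V.ncard : ℝ)| ≤ C * t i := by
    intro i
    obtain ⟨x₀, hx₀⟩ := hVne
    set c : ℝ := ∏ j : Fin k, ρ i (x₀ j) with hc
    have hqconst : ∀ x ∈ V, (∏ j : Fin k, ρ i (x j)) = c := by
      intro x hx
      have hfib : ∀ y ∈ V, (∏ j : Fin k, ρ i (y j))
          = ∏ a : A, (ρ i a) ^ (Finset.univ.filter fun j => y j = a).card := by
        intro y _
        rw [← Finset.prod_fiberwise_of_maps_to (g := fun j => y j)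
          (fun j _ => Finset.mem_univ (y j)) (fun j => ρ i (y j))]
        refine Finset.prod_congr rfl fun a _ => ?_
        rw [Finset.prod_congr rfl (fun j hj => by rw [(Finset.mem_filter.mp hj).2]),
          Finset.prod_const]
      rw [hfib x hx, hc, hfib x₀ hx₀]
      refine Finset.prod_congr rfl fun a _ => ?_
      congr 1
      have h1 := hcount x hx a
      have h2 := hcount x₀ hx₀ a
      exact_mod_cast h1.trans h2.symm
    have hc0 : 0 ≤ c := Finset.prod_nonneg fun j _ => hρ0 _ _
    have hbp0 : ∀ x : Fin k → A, 0 ≤ blockProb ρ i x :=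
      fun x => Finset.prod_nonneg fun j _ => hρ0 _ _
    have hbp_lb : δ ^ k ≤ blockProb ρ i x₀ := by
      calc δ ^ k = ∏ _j : Fin k, δ := by
            rw [Finset.prod_const, Finset.card_univ, Fintype.card_fin]
        _ ≤ ∏ j : Fin k, ρ (i + (j.val : ℤ)) (x₀ j) :=
            Finset.prod_le_prod (fun _ _ => le_of_lt hδ0) (fun j _ => (hδ _ _).le)
    set Ffin : Finset (Fin k → A) := (Set.toFinite F).toFinset with hFfin
    set Vfin : Finset (Fin k → A) := (Set.toFinite V).toFinset with hVfin
    have hFV : Ffin ⊆ Vfin := by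
      intro x hx
      rw [hVfin, Set.Finite.mem_toFinset]
      exact hF ((Set.Finite.mem_toFinset _).mp hx)
    have hx₀V : x₀ ∈ Vfin := by rw [hVfin, Set.Finite.mem_toFinset]; exact hx₀
    have hPFeq : blockProbSet ρ i F = ∑ x ∈ Ffin, blockProb ρ i x := by
      rw [blockProbSet, Finset.sum_indicator_eq_sum_filter]
      refine Finset.sum_congr ?_ (fun _ _ => rfl)
      ext x
      simp [hFfin, Set.Finite.mem_toFinset]
    have hPVeq : blockProbSet ρ i V = ∑ x ∈ Vfin, blockProb ρ i x := by
      rw [blockProbSet, Finset.sum_indicator_eq_sum_filter]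
      refine Finset.sum_congr ?_ (fun _ _ => rfl)
      ext x
      simp [hVfin, Set.Finite.mem_toFinset]
    have hncF : (F.ncard : ℝ) = (Ffin.card : ℝ) := by
      rw [Set.ncard_eq_toFinset_card F (Set.toFinite F)]
    have hncV : (V.ncard : ℝ) = (Vfin.card : ℝ) := by
      rw [Set.ncard_eq_toFinset_card V (Set.toFinite V)]
    have hbV : ∀ x ∈ Vfin, |blockProb ρ i x - c| ≤ (k : ℝ) * t i := by
      intro x hx
      have hxV : x ∈ V := (Set.Finite.mem_toFinset _).mp hx
      rw [← hqconst x hxV]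
      calc |blockProb ρ i x - ∏ j : Fin k, ρ i (x j)|
          ≤ ∑ j : Fin k, |ρ (i + (j.val : ℤ)) (x j) - ρ i (x j)| :=
            abs_prod_sub_prod_le_sum Finset.univ _ _
              (fun j _ => ⟨hρ0 _ _, hρ1 _ _, hρ0 _ _, hρ1 _ _⟩)
        _ ≤ ∑ _j : Fin k, t i :=
            Finset.sum_le_sum fun j _ => htel i j.val j.isLt.le (x j)
        _ = (k : ℝ) * t i := by
            rw [Finset.sum_const, Finset.card_univ, Fintype.card_fin, nsmul_eq_mul]
    have hPFc : |blockProbSet ρ i F - c * (Ffin.card : ℝ)| ≤ (Ffin.card : ℝ) * ((k : ℝ) * t i) := by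
      rw [hPFeq]
      have e : ∑ x ∈ Ffin, blockProb ρ i x - c * (Ffin.card : ℝ)
          = ∑ x ∈ Ffin, (blockProb ρ i x - c) := by
        rw [Finset.sum_sub_distrib, Finset.sum_const, nsmul_eq_mul]
        ring
      rw [e]
      calc |∑ x ∈ Ffin, (blockProb ρ i x - c)| ≤ ∑ x ∈ Ffin, |blockProb ρ i x - c| :=
            Finset.abs_sum_le_sum_abs _ _
        _ ≤ ∑ _x ∈ Ffin, (k : ℝ) * t i := Finset.sum_le_sum fun x hx => hbV x (hFV hx)
        _ = (Ffin.card : ℝ) * ((k : ℝ) * t i) := by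
            rw [Finset.sum_const, nsmul_eq_mul]
    have hPVc : |blockProbSet ρ i V - c * (Vfin.card : ℝ)| ≤ (Vfin.card : ℝ) * ((k : ℝ) * t i) := by
      rw [hPVeq]
      have e : ∑ x ∈ Vfin, blockProb ρ i x - c * (Vfin.card : ℝ)
          = ∑ x ∈ Vfin, (blockProb ρ i x - c) := by
        rw [Finset.sum_sub_distrib, Finset.sum_const, nsmul_eq_mul]
        ring
      rw [e]
      calc |∑ x ∈ Vfin, (blockProb ρ i x - c)| ≤ ∑ x ∈ Vfin, |blockProb ρ i x - c| :=
            Finset.abs_sum_le_sum_abs _ _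
        _ ≤ ∑ _x ∈ Vfin, (k : ℝ) * t i := Finset.sum_le_sum fun x hx => hbV x hx
        _ = (Vfin.card : ℝ) * ((k : ℝ) * t i) := by
            rw [Finset.sum_const, nsmul_eq_mul]
    have hPF0 : 0 ≤ blockProbSet ρ i F := by
      rw [hPFeq]; exact Finset.sum_nonneg fun x _ => hbp0 x
    have hPVlb : δ ^ k ≤ blockProbSet ρ i V := by
      rw [hPVeq]
      exact le_trans hbp_lb (Finset.single_le_sum (fun x _ => hbp0 x) hx₀V)
    have hPV0 : 0 < blockProbSet ρ i V := lt_of_lt_of_le (pow_pos hδ0 k) hPVlb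
    have hnV1 : (1 : ℝ) ≤ (Vfin.card : ℝ) := by
      have : 0 < Vfin.card := Finset.card_pos.mpr ⟨x₀, hx₀V⟩
      exact_mod_cast this
    have hnV0 : (0 : ℝ) < (Vfin.card : ℝ) := lt_of_lt_of_le one_pos hnV1
    have hnF0 : (0 : ℝ) ≤ (Ffin.card : ℝ) := Nat.cast_nonneg _
    have hnFV : (Ffin.card : ℝ) ≤ (Vfin.card : ℝ) := by
      exact_mod_cast Finset.card_le_card hFV
    have hnVN : (Vfin.card : ℝ) ≤ N := by
      rw [hN]
      exact_mod_cast Finset.card_le_univ Vfin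
    have hnum : |blockProbSet ρ i F * (Vfin.card : ℝ) - blockProbSet ρ i V * (Ffin.card : ℝ)|
        ≤ 2 * N ^ 2 * (k : ℝ) * t i := by
      have e : blockProbSet ρ i F * (Vfin.card : ℝ) - blockProbSet ρ i V * (Ffin.card : ℝ)
          = (blockProbSet ρ i F - c * (Ffin.card : ℝ)) * (Vfin.card : ℝ)
            - (Ffin.card : ℝ) * (blockProbSet ρ i V - c * (Vfin.card : ℝ)) := by ring
      rw [e]
      calc |(blockProbSet ρ i F - c * (Ffin.card : ℝ)) * (Vfin.card : ℝ)
            - (Ffin.card : ℝ) * (blockProbSet ρ i V - c * (Vfin.card : ℝ))|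
          ≤ |(blockProbSet ρ i F - c * (Ffin.card : ℝ))| * (Vfin.card : ℝ)
            + (Ffin.card : ℝ) * |(blockProbSet ρ i V - c * (Vfin.card : ℝ))| := by
            calc _ ≤ |(blockProbSet ρ i F - c * (Ffin.card : ℝ)) * (Vfin.card : ℝ)|
                + |(Ffin.card : ℝ) * (blockProbSet ρ i V - c * (Vfin.card : ℝ))| :=
                  abs_sub _ _
              _ = _ := by
                  rw [abs_mul, abs_mul, abs_of_nonneg (le_of_lt hnV0), abs_of_nonneg hnF0]
        _ ≤ ((Ffin.card : ℝ) * ((k : ℝ) * t i)) * (Vfin.card : ℝ)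
            + (Ffin.card : ℝ) * ((Vfin.card : ℝ) * ((k : ℝ) * t i)) := by
            have h1 := mul_le_mul_of_nonneg_right hPFc (le_of_lt hnV0)
            have h2 := mul_le_mul_of_nonneg_left hPVc hnF0
            linarith
        _ ≤ 2 * N ^ 2 * (k : ℝ) * t i := by
            have hkt : 0 ≤ (k : ℝ) * t i := mul_nonneg (Nat.cast_nonneg _) (ht0 i)
            nlinarith [mul_le_mul (le_trans hnFV hnVN) hnVN (le_of_lt hnV0) (le_trans (le_of_lt hnV0) hnVN)]
    rw [hncF, hncV, div_sub_div _ _ (ne_of_gt hPV0) (ne_of_gt hnV0), abs_div]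
    have hden : δ ^ k ≤ |blockProbSet ρ i V * (Vfin.card : ℝ)| := by
      rw [abs_of_nonneg (mul_nonneg (le_of_lt hPV0) (le_of_lt hnV0))]
      calc δ ^ k = δ ^ k * 1 := by ring
        _ ≤ blockProbSet ρ i V * (Vfin.card : ℝ) :=
            mul_le_mul hPVlb hnV1 one_pos.le (le_of_lt hPV0)
    calc |blockProbSet ρ i F * (Vfin.card : ℝ) - blockProbSet ρ i V * (Ffin.card : ℝ)|
          / |blockProbSet ρ i V * (Vfin.card : ℝ)|
        ≤ (2 * N ^ 2 * (k : ℝ) * t i) / δ ^ k := by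
          apply div_le_div₀ (by positivity) hnum (pow_pos hδ0 k) hden
      _ = C * t i := by rw [hC]; ring
  apply Summable.of_nonneg_of_le (fun i => sq_nonneg _) ?_ ((hhsum.mul_left (C ^ 2 * (k : ℝ))))
  intro i
  calc (blockProbSet ρ i F / blockProbSet ρ i V - (F.ncard : ℝ) / (V.ncard : ℝ)) ^ 2
      = |blockProbSet ρ i F / blockProbSet ρ i V - (F.ncard : ℝ) / (V.ncard : ℝ)| ^ 2 :=
        (sq_abs _).symm
    _ ≤ (C * t i) ^ 2 := pow_le_pow_left₀ (abs_nonneg _) (hmain i) 2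
    _ = C ^ 2 * t i ^ 2 := by ring
    _ ≤ C ^ 2 * ((k : ℝ) * h i) := mul_le_mul_of_nonneg_left (ht2 i) (sq_nonneg C)
    _ = C ^ 2 * (k : ℝ) * h i := by ring
end

section
/- Let A be a finite set and ρ = ⊗_{i∈ℤ} ρ_i a product probability measure on A^ℤ, nonsingular for the left shift and satisfying the Doeblin condition. Then for every k ∈ ℤ⁺ and every c = (c_0, …, c_{k−1}) ∈ A^k, the series ∑_{i∈ℤ} ( ρ_i^{⊕k}(c) − ρ_i^{⊗k}(c) )² converges, where ρ_i^{⊕k}(c) = ∏_{j=0}^{k−1} ρ_{i+j}(c_j) and ρ_i^{⊗k}(c) = ∏_{j=0}^{k−1} ρ_i(c_j). -/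
/-!
The shift carries `μ` to the product measure with marginals `ρ (i + 1)`. If
`∑ᵢ ∑ₐ (ρ (i + 1) a - ρ i a)²` diverged, the Hellinger affinities `∑ₐ √(ρ i a ρ (i + 1) a)`,
each at most `exp (-∑ₐ (ρ (i + 1) a - ρ i a)² / 8)`, would have arbitrarily small finite
products. Comparing the two product weights on a long window of coordinates gives sets of
`μ`-measure and complementary `μ ∘ shift⁻¹`-measure at most that product, and Borel–Cantelli
makes the two measures mutually singular, contradicting nonsingularity. So the one-step
differences `ρ (i + 1) a - ρ i a` are in `ℓ²(ℤ)`, hence so are the `j`-step differences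
`ρ (i + j) a - ρ i a`, which telescope into `j` shifted one-step differences. Finally, products
of numbers in `[0, 1]` are `1`-Lipschitz in each factor, so
`|ρ_i^{⊕k}(c) - ρ_i^{⊗k}(c)| ≤ ∑_{j<k} |ρ (i + j) (c j) - ρ i (c j)|`.
-/

open MeasureTheory Filter Set Topology

open scoped ENNReal

section HellingerAffinity

variable {A : Type*} [Fintype A]

noncomputable def hellingerAffinity (p q : A → ℝ) : ℝ :=
  ∑ a, √(p a * q a)

lemma IsProbVec.nonempty {p : A → ℝ} (hp : IsProbVec p) : Nonempty A := by
  by_contra h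
  rw [not_nonempty_iff] at h
  simpa using hp.2

lemma IsProbVec.le_one {p : A → ℝ} (hp : IsProbVec p) (a : A) : p a ≤ 1 :=
  hp.2 ▸ Finset.single_le_sum (fun b _ => hp.1 b) (Finset.mem_univ a)

lemma IsProbVec.abs_le_one {p : A → ℝ} (hp : IsProbVec p) (a : A) : |p a| ≤ 1 :=
  abs_le.2 ⟨by linarith [hp.1 a], hp.le_one a⟩

lemma IsProbVec.sum_sq_sub_le {p q : A → ℝ} (hp : IsProbVec p) (hq : IsProbVec q) :
    ∑ a, (q a - p a) ^ 2 ≤ 8 * (1 - hellingerAffinity p q) := by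
  have hsq : ∀ a, (√(p a) - √(q a)) ^ 2 = p a + q a - 2 * √(p a * q a) := fun a => by
    rw [sub_sq, Real.sq_sqrt (hp.1 a), Real.sq_sqrt (hq.1 a), Real.sqrt_mul (hp.1 a)]
    ring
  have hhellinger : ∑ a, (√(p a) - √(q a)) ^ 2 = 2 * (1 - hellingerAffinity p q) := by
    simp only [hsq, Finset.sum_sub_distrib, Finset.sum_add_distrib, hp.2, hq.2,
      hellingerAffinity, ← Finset.mul_sum]
    ring
  have hpoint : ∀ a, (q a - p a) ^ 2 ≤ 4 * (√(p a) - √(q a)) ^ 2 := fun a => by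
    have hx1 := Real.sqrt_le_one.2 (hp.le_one a)
    have hy1 := Real.sqrt_le_one.2 (hq.le_one a)
    have hsum : (√(p a) + √(q a)) ^ 2 ≤ 4 := by
      nlinarith [Real.sqrt_nonneg (p a), Real.sqrt_nonneg (q a)]
    calc (q a - p a) ^ 2 = (√(p a) - √(q a)) ^ 2 * (√(p a) + √(q a)) ^ 2 := by
          rw [← mul_pow, mul_comm, ← sq_sub_sq, Real.sq_sqrt (hp.1 a), Real.sq_sqrt (hq.1 a)]
          ring
      _ ≤ 4 * (√(p a) - √(q a)) ^ 2 := by nlinarith [sq_nonneg (√(p a) - √(q a))]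
  calc ∑ a, (q a - p a) ^ 2 ≤ ∑ a, 4 * (√(p a) - √(q a)) ^ 2 :=
        Finset.sum_le_sum fun a _ => hpoint a
    _ = 8 * (1 - hellingerAffinity p q) := by rw [← Finset.mul_sum, hhellinger]; ring

lemma IsProbVec.hellingerAffinity_le_exp {p q : A → ℝ} (hp : IsProbVec p) (hq : IsProbVec q) :
    hellingerAffinity p q ≤ Real.exp (-(∑ a, (q a - p a) ^ 2) / 8) := by
  linarith [hp.sum_sq_sub_le hq, Real.add_one_le_exp (-(∑ a, (q a - p a) ^ 2) / 8)]

lemma hellingerAffinity_nonneg (p q : A → ℝ) : 0 ≤ hellingerAffinity p q :=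
  Finset.sum_nonneg fun _ _ => Real.sqrt_nonneg _

lemma sum_min_le_hellingerAffinity {p q : A → ℝ} (hp : ∀ a, 0 ≤ p a) (hq : ∀ a, 0 ≤ q a) :
    ∑ a, min (p a) (q a) ≤ hellingerAffinity p q :=
  Finset.sum_le_sum fun a _ => Real.le_sqrt_of_sq_le <| by
    rw [sq]
    exact mul_le_mul (min_le_left _ _) (min_le_right _ _) (le_min (hp a) (hq a)) (hp a)

lemma hellingerAffinity_pi {ι : Type*} [Fintype ι] [DecidableEq ι] {p q : ι → A → ℝ}
    (hp : ∀ i a, 0 ≤ p i a) (hq : ∀ i a, 0 ≤ q i a) :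
    hellingerAffinity (fun g : ι → A => ∏ i, p i (g i)) (fun g => ∏ i, q i (g i)) =
      ∏ i, hellingerAffinity (p i) (q i) := by
  simp only [hellingerAffinity, ← Finset.prod_mul_distrib]
  rw [Finset.prod_univ_sum, Fintype.piFinset_univ]
  exact Finset.sum_congr rfl fun g _ =>
    Real.sqrt_prod _ fun i _ => mul_nonneg (hp i (g i)) (hq i (g i))

lemma exists_prod_hellingerAffinity_le {ι : Type*} {p q : ι → A → ℝ}
    (hp : ∀ i, IsProbVec (p i)) (hq : ∀ i, IsProbVec (q i))
    (hdiv : ¬Summable fun i => ∑ a, (q i a - p i a) ^ 2) {ε : ℝ} (hε : 0 < ε) :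
    ∃ s : Finset ι, ∏ i ∈ s, hellingerAffinity (p i) (q i) ≤ ε := by
  obtain ⟨s, hs⟩ : ∃ s : Finset ι, -8 * Real.log ε ≤ ∑ i ∈ s, ∑ a, (q i a - p i a) ^ 2 := by
    by_contra! h
    exact hdiv (summable_of_sum_le (fun i => Finset.sum_nonneg fun a _ => sq_nonneg _)
      fun s => (h s).le)
  refine ⟨s, ?_⟩
  calc ∏ i ∈ s, hellingerAffinity (p i) (q i)
      ≤ ∏ i ∈ s, Real.exp (-(∑ a, (q i a - p i a) ^ 2) / 8) :=
        Finset.prod_le_prod (fun i _ => hellingerAffinity_nonneg _ _)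
          fun i _ => (hp i).hellingerAffinity_le_exp (hq i)
    _ = Real.exp (-(∑ i ∈ s, ∑ a, (q i a - p i a) ^ 2) / 8) := by
        rw [← Real.exp_sum, ← Finset.sum_div, ← Finset.sum_neg_distrib]
    _ ≤ Real.exp (Real.log ε) := Real.exp_le_exp.2 (by linarith)
    _ = ε := Real.exp_log hε

end HellingerAffinity

lemma restrict_preimage_singleton_eq_cylinder {A : Type*} (s : Finset ℤ) (y : ℤ → A) :
    (s.restrict : (ℤ → A) → s → A) ⁻¹' {s.restrict y} = _root_.cylinder s y := by
  ext x
  simp [_root_.cylinder, funext_iff]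

section ProductMeasure

variable {A : Type*} [MeasurableSpace A]

lemma measurableSet_cylinder [MeasurableSingletonClass A] (s : Finset ℤ) (y : ℤ → A) :
    MeasurableSet (_root_.cylinder s y) := by
  rw [← restrict_preimage_singleton_eq_cylinder]
  exact (measurableSet_singleton _).preimage (Finset.measurable_restrict s)

lemma IsProductMeasure.measure_restrict_preimage_singleton [Nonempty A] {μ : Measure (ℤ → A)}
    {ρ : ℤ → A → ℝ} (hμ : IsProductMeasure μ ρ) (hρ : ∀ i a, 0 ≤ ρ i a) {s : Finset ℤ}
    (g : s → A) :
    μ ((s.restrict : (ℤ → A) → s → A) ⁻¹' {g}) = ENNReal.ofReal (∏ i : s, ρ i (g i)) := by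
  set y : ℤ → A := Function.extend Subtype.val g fun _ => Classical.arbitrary A
  have hy : ∀ i : s, y i = g i := Subtype.val_injective.extend_apply _ _
  have hg : s.restrict y = g := funext hy
  rw [← hg, restrict_preimage_singleton_eq_cylinder, hμ,
    ENNReal.ofReal_prod_of_nonneg fun _ _ => hρ _ _, ← Finset.prod_coe_sort s]
  rfl

lemma IsProductMeasure.measure_univ [Nonempty A] {μ : Measure (ℤ → A)} {ρ : ℤ → A → ℝ}
    (hμ : IsProductMeasure μ ρ) : μ univ = 1 := by
  simpa [_root_.cylinder] using hμ ∅ fun _ => Classical.arbitrary A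

lemma IsProductMeasure.map_shift [MeasurableSingletonClass A] {μ : Measure (ℤ → A)}
    {ρ : ℤ → A → ℝ} (hμ : IsProductMeasure μ ρ) :
    IsProductMeasure (μ.map shift) fun i => ρ (i + 1) := by
  intro s y
  have hshift : Measurable (shift : (ℤ → A) → ℤ → A) :=
    measurable_pi_lambda _ fun i => measurable_pi_apply (i + 1)
  have hpre : shift ⁻¹' _root_.cylinder s y =
      _root_.cylinder (s.map (addRightEmbedding 1)) fun n => y (n - 1) := by
    ext x
    simp [_root_.cylinder, shift]
  rw [Measure.map_apply hshift (measurableSet_cylinder s y), hpre, hμ, Finset.prod_map]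
  simp

variable [Fintype A] [MeasurableSingletonClass A]

lemma exists_measurableSet_measure_le_prod_hellingerAffinity [Nonempty A]
    {μ ν : Measure (ℤ → A)} {p q : ℤ → A → ℝ} (hμ : IsProductMeasure μ p)
    (hν : IsProductMeasure ν q) (hp : ∀ i a, 0 ≤ p i a) (hq : ∀ i a, 0 ≤ q i a)
    (s : Finset ℤ) :
    ∃ E, MeasurableSet E ∧
      μ E ≤ ENNReal.ofReal (∏ i ∈ s, hellingerAffinity (p i) (q i)) ∧
      ν Eᶜ ≤ ENNReal.ofReal (∏ i ∈ s, hellingerAffinity (p i) (q i)) := by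
  classical
  set P : (s → A) → ℝ := fun g => ∏ i : s, p i (g i)
  set Q : (s → A) → ℝ := fun g => ∏ i : s, q i (g i)
  have hP : ∀ g, 0 ≤ P g := fun g => Finset.prod_nonneg fun i _ => hp _ _
  have hQ : ∀ g, 0 ≤ Q g := fun g => Finset.prod_nonneg fun i _ => hq _ _
  have hfiber : ∀ g : s → A, MeasurableSet ((s.restrict : (ℤ → A) → s → A) ⁻¹' {g}) :=
    fun g => (measurableSet_singleton g).preimage (Finset.measurable_restrict s)
  have hmeasure : ∀ (m : Measure (ℤ → A)) (r : ℤ → A → ℝ), IsProductMeasure m r →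
      (∀ i a, 0 ≤ r i a) → ∀ T : Finset (s → A),
      m (s.restrict ⁻¹' T) = ENNReal.ofReal (∑ g ∈ T, ∏ i : s, r i (g i)) := by
    intro m r hm hr T
    rw [← sum_measure_preimage_singleton T fun g _ => hfiber g,
      ENNReal.ofReal_sum_of_nonneg fun g _ => Finset.prod_nonneg fun i _ => hr _ _]
    exact Finset.sum_congr rfl fun g _ => hm.measure_restrict_preimage_singleton hr g
  have haff : ∑ g, min (P g) (Q g) ≤ ∏ i ∈ s, hellingerAffinity (p i) (q i) := by
    rw [← Finset.prod_coe_sort, ← hellingerAffinity_pi (p := fun i : s => p i)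
      (q := fun i : s => q i) (fun i => hp i) fun i => hq i]
    exact sum_min_le_hellingerAffinity hP hQ
  -- with `E` the set where `P < Q`, `μ E + ν Eᶜ = ∑ g, min (P g) (Q g)`
  set T : Finset (s → A) := {g | P g < Q g}
  refine ⟨s.restrict ⁻¹' T, T.measurableSet.preimage (Finset.measurable_restrict s), ?_, ?_⟩
  · rw [hmeasure μ p hμ hp]
    refine ENNReal.ofReal_le_ofReal (le_trans ?_ haff)
    calc ∑ g ∈ T, P g = ∑ g ∈ T, min (P g) (Q g) :=
          Finset.sum_congr rfl fun g hg => (min_eq_left (Finset.mem_filter.1 hg).2.le).symm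
      _ ≤ ∑ g, min (P g) (Q g) :=
          Finset.sum_le_sum_of_subset_of_nonneg (Finset.subset_univ _)
            fun g _ _ => le_min (hP g) (hQ g)
  · rw [← preimage_compl, ← Finset.coe_compl, hmeasure ν q hν hq]
    refine ENNReal.ofReal_le_ofReal (le_trans ?_ haff)
    calc ∑ g ∈ Tᶜ, Q g = ∑ g ∈ Tᶜ, min (P g) (Q g) :=
          Finset.sum_congr rfl fun g hg =>
            (min_eq_right (not_lt.1 (by simpa [T] using hg))).symm
      _ ≤ ∑ g, min (P g) (Q g) :=
          Finset.sum_le_sum_of_subset_of_nonneg (Finset.subset_univ _)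
            fun g _ _ => le_min (hP g) (hQ g)

end ProductMeasure

lemma MeasureTheory.Measure.mutuallySingular_of_tsum_ne_top {X : Type*} [MeasurableSpace X]
    {μ ν : Measure X} {E : ℕ → Set X} (hE : ∀ n, MeasurableSet (E n))
    (hμ : ∑' n, μ (E n) ≠ ∞) (hν : ∑' n, ν (E n)ᶜ ≠ ∞) : μ ⟂ₘ ν := by
  refine ⟨limsup E atTop, .measurableSet_limsup hE, measure_limsup_atTop_eq_zero hμ,
    measure_mono_null ?_ (measure_limsup_atTop_eq_zero hν)⟩
  rw [limsup_compl]
  exact liminf_le_limsup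

section Kakutani

variable {A : Type*} [Fintype A] [MeasurableSpace A] [MeasurableSingletonClass A]
  {p q : ℤ → A → ℝ} {μ ν : Measure (ℤ → A)}

lemma IsProductMeasure.mutuallySingular_of_not_summable (hμ : IsProductMeasure μ p)
    (hν : IsProductMeasure ν q) (hp : ∀ i, IsProbVec (p i)) (hq : ∀ i, IsProbVec (q i))
    (hdiv : ¬Summable fun i => ∑ a, (q i a - p i a) ^ 2) : μ ⟂ₘ ν := by
  have := (hp 0).nonempty
  choose s hs using fun n : ℕ =>
    exists_prod_hellingerAffinity_le hp hq hdiv (pow_pos (one_half_pos (α := ℝ)) n)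
  choose E hE hμE hνE using fun n =>
    exists_measurableSet_measure_le_prod_hellingerAffinity hμ hν (fun i => (hp i).1)
      (fun i => (hq i).1) (s n)
  have hgeom : ∑' n : ℕ, ENNReal.ofReal ((1 / 2) ^ n) ≠ ∞ := by
    rw [← ENNReal.ofReal_tsum_of_nonneg (fun n => by positivity) summable_geometric_two]
    exact ENNReal.ofReal_ne_top
  refine Measure.mutuallySingular_of_tsum_ne_top hE ?_ ?_
  · exact ne_top_of_le_ne_top hgeom <|
      ENNReal.tsum_le_tsum fun n => (hμE n).trans (ENNReal.ofReal_le_ofReal (hs n))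
  · exact ne_top_of_le_ne_top hgeom <|
      ENNReal.tsum_le_tsum fun n => (hνE n).trans (ENNReal.ofReal_le_ofReal (hs n))

/-- The easy half of Kakutani's dichotomy, in the squared-difference form. -/
theorem IsProductMeasure.summable_sum_sq_sub_of_absolutelyContinuous
    (hμ : IsProductMeasure μ p) (hν : IsProductMeasure ν q) (hp : ∀ i, IsProbVec (p i))
    (hq : ∀ i, IsProbVec (q i)) (hνμ : ν ≪ μ) :
    Summable fun i => ∑ a, (q i a - p i a) ^ 2 := by
  have := (hp 0).nonempty
  by_contra hdiv
  have hν0 : ν = 0 := Measure.eq_zero_of_absolutelyContinuous_of_mutuallySingular hνμ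
    (hμ.mutuallySingular_of_not_summable hν hp hq hdiv).symm
  simpa [hν0] using hν.measure_univ

end Kakutani

section SquareSummable

variable {ι : Type*}

lemma memℓp_two_iff_summable_sq {f : ι → ℝ} : Memℓp f 2 ↔ Summable fun i => f i ^ 2 := by
  rw [memℓp_gen_iff (by norm_num)]
  norm_num [Real.norm_eq_abs, sq_abs]

lemma Memℓp.comp_equiv {κ E : Type*} [NormedAddCommGroup E] {p : ℝ≥0∞} {f : ι → E}
    (hf : Memℓp f p) (e : κ ≃ ι) : Memℓp (f ∘ e) p := by
  obtain (rfl | rfl | hp) := p.trichotomy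
  · rw [memℓp_zero_iff] at hf ⊢
    exact hf.preimage e.injective.injOn
  · rw [memℓp_infty_iff] at hf ⊢
    exact hf.mono (range_comp_subset_range e fun i => ‖f i‖)
  · rw [memℓp_gen_iff hp] at hf ⊢
    exact e.summable_iff.2 hf

lemma memℓp_finset_sum {κ : Type*} {p : ℝ≥0∞} (s : Finset κ) {f : κ → ι → ℝ}
    (hf : ∀ j ∈ s, Memℓp (f j) p) : Memℓp (fun i => ∑ j ∈ s, f j i) p := by
  induction s using Finset.cons_induction with
  | empty =>
    simp only [Finset.sum_empty]
    exact zero_memℓp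
  | cons j s hj ih =>
    simp only [Finset.sum_cons]
    exact (hf j (Finset.mem_cons_self j s)).add
      (ih fun j' hj' => hf j' (Finset.mem_cons_of_mem hj'))

lemma Memℓp.abs {p : ℝ≥0∞} {f : ι → ℝ} (hf : Memℓp f p) : Memℓp (fun i => |f i|) p := by
  simpa only [Real.norm_eq_abs] using hf.norm

lemma Memℓp.sub_of_succ_sub {E : Type*} [NormedAddCommGroup E] {p : ℝ≥0∞} {u : ℤ → E}
    (hu : Memℓp (fun i => u (i + 1) - u i) p) (n : ℕ) : Memℓp (fun i => u (i + n) - u i) p := by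
  induction n with
  | zero =>
    simp only [Nat.cast_zero, add_zero, sub_self]
    exact zero_memℓp
  | succ n ih =>
    have hshift : Memℓp (fun i => u (i + n + 1) - u (i + n)) p :=
      hu.comp_equiv (Equiv.addRight (n : ℤ))
    convert hshift.add ih using 1
    ext i
    simp only [Pi.add_apply, Nat.cast_succ, ← add_assoc]
    abel

end SquareSummable

lemma abs_prod_sub_prod_le_sum_abs_sub {κ : Type*} (s : Finset κ) {f g : κ → ℝ}
    (hf : ∀ j ∈ s, |f j| ≤ 1) (hg : ∀ j ∈ s, |g j| ≤ 1) :
    |∏ j ∈ s, f j - ∏ j ∈ s, g j| ≤ ∑ j ∈ s, |f j - g j| := by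
  induction s using Finset.cons_induction with
  | empty => simp
  | cons j s hj ih =>
    have hf' : ∀ j ∈ s, |f j| ≤ 1 := fun j' hj' => hf j' (Finset.mem_cons_of_mem hj')
    have hg' : ∀ j ∈ s, |g j| ≤ 1 := fun j' hj' => hg j' (Finset.mem_cons_of_mem hj')
    have hprod : |∏ j ∈ s, f j| ≤ 1 := by
      rw [Finset.abs_prod]
      exact Finset.prod_le_one (fun _ _ => abs_nonneg _) hf'
    rw [Finset.prod_cons, Finset.prod_cons, Finset.sum_cons]
    calc |f j * ∏ j ∈ s, f j - g j * ∏ j ∈ s, g j|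
        = |(f j - g j) * ∏ j ∈ s, f j + g j * (∏ j ∈ s, f j - ∏ j ∈ s, g j)| := by ring_nf
      _ ≤ |f j - g j| * 1 + 1 * ∑ j ∈ s, |f j - g j| := by
        refine (abs_add_le _ _).trans ?_
        rw [abs_mul, abs_mul]
        gcongr
        · exact hg j (Finset.mem_cons_self j s)
        · exact ih hf' hg'
      _ = |f j - g j| + ∑ j ∈ s, |f j - g j| := by ring

theorem blockProb_sq_summable_general {A : Type*} [Fintype A]
    [MeasurableSpace A] [MeasurableSingletonClass A]
    (ρ : ℤ → A → ℝ) (hρ : ∀ i, IsProbVec (ρ i))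
    (μ : Measure (ℤ → A)) (hprod : IsProductMeasure μ ρ)
    (hns : MeasEquiv (μ.map shift) μ)
    (k : ℕ) (c : Fin k → A) :
    Summable (fun i : ℤ => (blockProb ρ i c - ∏ j : Fin k, ρ i (c j)) ^ 2) := by
  have hincr : Summable fun i => ∑ a, (ρ (i + 1) a - ρ i a) ^ 2 :=
    hprod.summable_sum_sq_sub_of_absolutelyContinuous hprod.map_shift hρ (fun i => hρ (i + 1))
      hns.1
  have hstep (a : A) : Memℓp (fun i => ρ (i + 1) a - ρ i a) 2 :=
    memℓp_two_iff_summable_sq.2 <| hincr.of_nonneg_of_le (fun _ => sq_nonneg _) fun i =>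
      Finset.single_le_sum (fun b _ => sq_nonneg (ρ (i + 1) b - ρ i b)) (Finset.mem_univ a)
  have hblock : Memℓp (fun i => ∑ j : Fin k, |ρ (i + (j : ℕ)) (c j) - ρ i (c j)|) 2 :=
    memℓp_finset_sum _ fun j _ =>
      (Memℓp.sub_of_succ_sub (u := fun i => ρ i (c j)) (hstep (c j)) j).abs
  refine memℓp_two_iff_summable_sq.1 (hblock.mono fun i => ?_)
  rw [Real.norm_eq_abs, blockProb]
  exact abs_prod_sub_prod_le_sum_abs_sub _ (fun j _ => (hρ (i + j)).abs_le_one (c j))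
    fun j _ => (hρ i).abs_le_one (c j)

/-- For a nonsingular Doeblin Bernoulli shift, the block probabilities
`ρ_i^{⊕k}(c) = ∏_j ρ_{i+j}(c_j)` and `ρ_i^{⊗k}(c) = ∏_j ρ_i(c_j)` are square-summably
close. -/
theorem blockProb_sq_summable {A : Type*} [Fintype A]
    [MeasurableSpace A] [MeasurableSingletonClass A]
    (ρ : ℤ → A → ℝ) (hρ : ∀ i, IsProbVec (ρ i))
    (μ : Measure (ℤ → A)) (hprod : IsProductMeasure μ ρ)
    (hns : MeasEquiv (μ.map shift) μ)
    (hdoeblin : ∃ δ > 0, ∀ (i : ℤ) (b : A), δ < ρ i b)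
    (k : ℕ) (hk : 0 < k) (c : Fin k → A) :
    Summable (fun i : ℤ => (blockProb ρ i c - ∏ j : Fin k, ρ i (c j)) ^ 2) :=
  blockProb_sq_summable_general ρ hρ μ hprod hns k c
end

section
/- Let A be a finite set and ρ = ⊗_{i∈ℤ} ρ_i a product probability measure on A^ℤ, nonsingular for the left shift, satisfying the Doeblin condition and having limiting marginal measure p. For every ε > 0 there exist δ > 0, k₀ ∈ ℤ⁺ and β > 0 such that for all k > k₀: (a) if q is a probability measure on A of denominator k with d_TV(q, p) < δ, then #type_k(q) ≥ 2^{(H(p)−ε/2)k}; and (b) for all but finitely many n∈ℤ, ρ_n^{⊕k}(Ĝ_{k,δ}) ≥ 1 − e^{−βk}, where Ĝ_{k,δ} = {x ∈ A^k : d_TV(emp(x), p) < δ}. -/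
open MeasureTheory Filter Set Topology

/-- Shannon entropy (in bits) of a probability vector. -/
noncomputable def entropy {A : Type*} [Fintype A] (p : A → ℝ) : ℝ :=
  -∑ a, p a * Real.logb 2 (p a)

/-- Total variation distance between two vectors on a finite set. -/
noncomputable def dTV {A : Type*} [Fintype A] (q₁ q₂ : A → ℝ) : ℝ :=
  ∑ a, |q₁ a - q₂ a|

/-- The `k`-type class of a probability vector `q`. -/
def typeClass {A : Type*} [Fintype A] [DecidableEq A] (k : ℕ) (q : A → ℝ) :
    Set (Fin k → A) :=
  {x | ∀ a, emp x a = q a}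

section AuxCT

open Finset Stirling

namespace AuxCT

lemma stirling_le (n : ℕ) : stirlingSeq (n + 1) ≤ stirlingSeq 1 := by
  have h := Stirling.log_stirlingSeq'_antitone (Nat.zero_le n)
  simp only [Function.comp] at h
  exact (Real.log_le_log_iff (stirlingSeq'_pos n) (stirlingSeq'_pos 0)).mp h

lemma stirling_ge (n : ℕ) : Real.sqrt Real.pi ≤ stirlingSeq (n + 1) := by
  have hanti : Antitone (fun n => stirlingSeq (n + 1)) := by
    intro a b hab
    have h := Stirling.log_stirlingSeq'_antitone hab
    simp only [Function.comp] at h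
    exact (Real.log_le_log_iff (stirlingSeq'_pos b) (stirlingSeq'_pos a)).mp h
  exact hanti.le_of_tendsto
    (tendsto_stirlingSeq_sqrt_pi.comp (Filter.tendsto_add_atTop_nat 1)) n

lemma factorial_ge (n : ℕ) (hn : 1 ≤ n) : ((n:ℝ)/Real.exp 1)^n ≤ n.factorial := by
  obtain ⟨m, rfl⟩ : ∃ m, n = m + 1 := ⟨n - 1, by omega⟩
  have h := stirling_ge m
  rw [stirlingSeq] at h
  set N : ℝ := ((m + 1 : ℕ) : ℝ) with hNdef
  have hN : (1:ℝ) ≤ N := by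
    rw [hNdef]; exact_mod_cast Nat.one_le_iff_ne_zero.mpr (Nat.succ_ne_zero m)
  have hd : (0:ℝ) < Real.sqrt (2 * N) * (N / Real.exp 1) ^ (m+1) := by positivity
  rw [le_div_iff₀ hd] at h
  calc (N / Real.exp 1)^(m+1)
      ≤ Real.sqrt Real.pi * (Real.sqrt (2*N) * (N / Real.exp 1)^(m+1)) := by
        nlinarith [Real.sqrt_le_sqrt (by linarith [Real.pi_gt_three] : (1:ℝ) ≤ Real.pi),
          Real.sqrt_le_sqrt (by linarith : (1:ℝ) ≤ 2*N), Real.sqrt_one,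
          pow_pos (by positivity : (0:ℝ) < N / Real.exp 1) (m+1),
          Real.sqrt_nonneg Real.pi, Real.sqrt_nonneg (2*N)]
    _ ≤ ((m+1 : ℕ).factorial : ℝ) := h

lemma factorial_le (n : ℕ) (hn : 1 ≤ n) :
    (n.factorial : ℝ) ≤ Real.exp 1 * Real.sqrt n * ((n:ℝ)/Real.exp 1)^n := by
  obtain ⟨m, rfl⟩ : ∃ m, n = m + 1 := ⟨n - 1, by omega⟩
  have h := stirling_le m
  rw [stirlingSeq, stirlingSeq] at h
  set N : ℝ := ((m + 1 : ℕ) : ℝ) with hNdef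
  have hN : (1:ℝ) ≤ N := by
    rw [hNdef]; exact_mod_cast Nat.one_le_iff_ne_zero.mpr (Nat.succ_ne_zero m)
  have hd : (0:ℝ) < Real.sqrt (2 * N) * (N / Real.exp 1) ^ (m+1) := by positivity
  rw [div_le_div_iff₀ hd (by positivity)] at h
  have hs : Real.sqrt (2 * N) = Real.sqrt 2 * Real.sqrt N := Real.sqrt_mul (by norm_num) N
  have h1 : ((1:ℕ).factorial : ℝ) = 1 := by norm_num
  simp only [Nat.cast_one, pow_one, h1, one_mul] at h
  have h2 : Real.sqrt (2*(1:ℝ)) = Real.sqrt 2 := by norm_num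
  rw [h2, hs] at h
  have hsq2 : (0:ℝ) < Real.sqrt 2 := by positivity
  have he : (0:ℝ) < Real.exp 1 := Real.exp_pos 1
  have hsN : (0:ℝ) < Real.sqrt N := by positivity
  calc ((m+1:ℕ).factorial : ℝ)
      ≤ Real.sqrt 2 * Real.sqrt N * (N/Real.exp 1)^(m+1) / (Real.sqrt 2 * (1/Real.exp 1)) := by
        rw [le_div_iff₀ (by positivity)]; nlinarith
    _ = Real.exp 1 * Real.sqrt N * (N / Real.exp 1)^(m+1) := by
        field_simp

variable {A : Type*} [Fintype A] [DecidableEq A]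

lemma factorial_le_prod_mul_card (k : ℕ) (m : A → ℕ) (hm : ∑ a, m a = k) :
    k.factorial ≤ (∏ a, (m a).factorial) *
      (Finset.univ.filter fun x : Fin k → A =>
        ∀ a, (Finset.univ.filter fun j => x j = a).card = m a).card := by
  classical
  have hcard : Fintype.card (Σ a : A, Fin (m a)) = Fintype.card (Fin k) := by
    simp [Fintype.card_sigma, hm]
  obtain ⟨e⟩ : Nonempty ((Fin k) ≃ (Σ a : A, Fin (m a))) :=
    ⟨Fintype.equivOfCardEq hcard.symm⟩
  set x₀ : Fin k → A := fun j => (e j).1 with hx₀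
  have hcount : ∀ a, (Finset.univ.filter fun j => x₀ j = a).card = m a := by
    intro a
    rw [← Fintype.card_subtype]
    have e2 : {j : Fin k // x₀ j = a} ≃ {s : Σ a' : A, Fin (m a') // s.1 = a} :=
      e.subtypeEquiv (fun j => Iff.rfl)
    have e3 : {s : Σ a' : A, Fin (m a') // s.1 = a} ≃ Fin (m a) :=
      { toFun := fun s => Fin.cast (congrArg m s.prop) s.1.2
        invFun := fun v => ⟨⟨a, v⟩, rfl⟩
        left_inv := by rintro ⟨⟨a', v⟩, h⟩; subst h; rfl
        right_inv := fun v => rfl }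
    rw [Fintype.card_congr (e2.trans e3), Fintype.card_fin]
  set T : Finset (Fin k → A) := Finset.univ.filter fun x : Fin k → A =>
        ∀ a, (Finset.univ.filter fun j => x j = a).card = m a with hT
  set f : Equiv.Perm (Fin k) → (Fin k → A) := fun σ => x₀ ∘ σ with hf
  have himg : Finset.univ.image f ⊆ T := by
    intro x hx
    obtain ⟨σ, -, rfl⟩ := Finset.mem_image.mp hx
    rw [hT, Finset.mem_filter]
    refine ⟨Finset.mem_univ _, fun a => ?_⟩
    rw [← Fintype.card_subtype, ← hcount a, ← Fintype.card_subtype]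
    exact Fintype.card_congr ((σ : Equiv.Perm (Fin k)).subtypeEquiv (fun j => Iff.rfl))
  have hfiber : ∀ x ∈ Finset.univ.image f,
      (Finset.univ.filter fun σ : Equiv.Perm (Fin k) => f σ = x).card ≤
        ∏ a, (m a).factorial := by
    intro x hx
    have hxT := himg hx
    rw [hT, Finset.mem_filter] at hxT
    have hxc := hxT.2
    rw [← Fintype.card_subtype]
    have hinj : Function.Injective
        (fun (σ : {σ : Equiv.Perm (Fin k) // f σ = x}) =>
          (fun a => (⟨fun j => ⟨σ.1 j.1, by
              have := congrFun σ.prop j.1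
              simp only [hf, Function.comp_apply] at this
              rw [this, j.prop]⟩, by
              intro j₁ j₂ hj
              exact Subtype.ext (σ.1.injective (congrArg Subtype.val hj))⟩ :
            {j : Fin k // x j = a} ↪ {j : Fin k // x₀ j = a}) :
            ∀ a : A, ({j : Fin k // x j = a} ↪ {j : Fin k // x₀ j = a}))) := by
      intro σ₁ σ₂ hσ
      apply Subtype.ext; apply Equiv.ext; intro j
      have := congrFun (congrArg (fun g => (g (x j)).toFun) hσ) ⟨j, rfl⟩
      exact congrArg Subtype.val this
    calc Fintype.card {σ : Equiv.Perm (Fin k) // f σ = x}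
        ≤ Fintype.card (∀ a : A, ({j : Fin k // x j = a} ↪ {j : Fin k // x₀ j = a})) :=
          Fintype.card_le_of_injective _ hinj
      _ = ∏ a, Fintype.card ({j : Fin k // x j = a} ↪ {j : Fin k // x₀ j = a}) :=
          Fintype.card_pi
      _ = ∏ a, (m a).factorial := by
          refine Finset.prod_congr rfl fun a _ => ?_
          rw [Fintype.card_embedding_eq, Fintype.card_subtype, Fintype.card_subtype,
            hcount a, hxc a, Nat.descFactorial_self]
  calc k.factorial = Fintype.card (Equiv.Perm (Fin k)) := by
        rw [Fintype.card_perm, Fintype.card_fin]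
    _ = (Finset.univ : Finset (Equiv.Perm (Fin k))).card := Finset.card_univ.symm
    _ ≤ (∏ a, (m a).factorial) * (Finset.univ.image f).card :=
        Finset.card_le_mul_card_image Finset.univ _ hfiber
    _ ≤ (∏ a, (m a).factorial) * T.card :=
        Nat.mul_le_mul_left _ (Finset.card_le_card himg)

lemma chernoff_aux {k : ℕ} (w : Fin k → A → ℝ) (hw : ∀ j b, 0 ≤ w j b)
    (h : A → ℝ) (V : Set (Fin k → A)) (m : ℝ)
    (hV : ∀ x ∈ V, m ≤ ∑ j, h (x j)) :
    ∑ x : Fin k → A, V.indicator (fun x => ∏ j, w j (x j)) x ≤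
      Real.exp (-m) * ∏ j, ∑ b, w j b * Real.exp (h b) := by
  classical
  have step1 : ∀ x : Fin k → A, V.indicator (fun x => ∏ j, w j (x j)) x ≤
      Real.exp (-m) * ∏ j, (w j (x j) * Real.exp (h (x j))) := by
    intro x
    have hprod : (0:ℝ) ≤ ∏ j, w j (x j) := Finset.prod_nonneg fun j _ => hw j (x j)
    by_cases hx : x ∈ V
    · rw [Set.indicator_of_mem hx]
      have heq : Real.exp (-m) * ∏ j, (w j (x j) * Real.exp (h (x j)))
          = (∏ j, w j (x j)) * Real.exp (∑ j, h (x j) - m) := by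
        rw [Finset.prod_mul_distrib, ← Real.exp_sum, sub_eq_add_neg, Real.exp_add]
        ring
      rw [heq]
      nlinarith [Real.one_le_exp (by linarith [hV x hx] : (0:ℝ) ≤ ∑ j, h (x j) - m), hprod]
    · rw [Set.indicator_of_notMem hx]
      have : (0:ℝ) ≤ ∏ j, (w j (x j) * Real.exp (h (x j))) :=
        Finset.prod_nonneg fun j _ => mul_nonneg (hw j (x j)) (Real.exp_pos _).le
      positivity
  calc ∑ x : Fin k → A, V.indicator (fun x => ∏ j, w j (x j)) x
      ≤ ∑ x : Fin k → A, Real.exp (-m) * ∏ j, (w j (x j) * Real.exp (h (x j))) :=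
        Finset.sum_le_sum fun x _ => step1 x
    _ = Real.exp (-m) * ∑ x : Fin k → A, ∏ j, (w j (x j) * Real.exp (h (x j))) := by
        rw [Finset.mul_sum]
    _ = Real.exp (-m) * ∏ j, ∑ b, w j b * Real.exp (h b) := by
        congr 1
        rw [Finset.prod_univ_sum (fun _ => Finset.univ)
          (fun j b => w j b * Real.exp (h b)), Fintype.piFinset_univ]

lemma exp_le_quadratic {x : ℝ} (hx : |x| ≤ 1) : Real.exp x ≤ 1 + x + x^2 := by
  have h := Real.exp_bound hx (by norm_num : 0 < 2)
  have h2 : ∑ m ∈ Finset.range 2, x ^ m / (m.factorial : ℝ) = 1 + x := by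
    simp [Finset.sum_range_succ]
  rw [h2] at h
  have h' := abs_le.mp h
  norm_num at h'
  nlinarith [sq_nonneg x, h'.2, sq_abs x]

lemma sum_exp_factor {k : ℕ} (w : Fin k → A → ℝ)
    (hw1 : ∀ j, ∑ b, w j b = 1) (a : A) (lam : ℝ) (j : Fin k) :
    ∑ b, w j b * Real.exp (if b = a then lam else 0) =
      1 + w j a * (Real.exp lam - 1) := by
  have hterm : ∀ b, w j b * Real.exp (if b = a then lam else 0) =
      w j b + (if b = a then w j b * (Real.exp lam - 1) else 0) := by
    intro b
    by_cases hb : b = a <;> simp [hb] <;> ring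
  rw [Finset.sum_congr rfl (fun b _ => hterm b), Finset.sum_add_distrib, hw1,
    Finset.sum_ite_eq' Finset.univ a (fun b => w j b * (Real.exp lam - 1))]
  simp

lemma tail_upper {k : ℕ} (w : Fin k → A → ℝ) (hw : ∀ j b, 0 ≤ w j b)
    (hw1 : ∀ j, ∑ b, w j b = 1) (a : A) (pa t : ℝ) (ht : 0 < t) (ht1 : t ≤ 1)
    (hclose : ∀ j, |w j a - pa| ≤ t / 2) :
    ∑ x : Fin k → A, ({x : Fin k → A |
        (pa + t) * k ≤ ((Finset.univ.filter fun j => x j = a).card : ℝ)}).indicator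
      (fun x => ∏ j, w j (x j)) x ≤ Real.exp (-(k * (t^2/16))) := by
  set lam := t/4 with hlam
  have hlam0 : 0 < lam := by positivity
  have hlam1 : lam ≤ 1 := by rw [hlam]; linarith
  set h : A → ℝ := fun b => if b = a then lam else 0 with hh
  have hbound := chernoff_aux w hw h _ (lam * ((pa + t) * k)) (fun x hx => by
    have hx' : (pa + t) * k ≤ ((Finset.univ.filter fun j => x j = a).card : ℝ) := hx
    have hsum : ∑ j, h (x j) = ((Finset.univ.filter fun j => x j = a).card : ℝ) * lam := by
      rw [hh]
      simp only []
      rw [Finset.sum_ite, Finset.sum_const, Finset.sum_const_zero, add_zero,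
        nsmul_eq_mul]
    rw [hsum]
    nlinarith)
  refine hbound.trans ?_
  have hfac : ∀ j, ∑ b, w j b * Real.exp (h b) ≤ Real.exp (w j a * lam + lam^2) := by
    intro j
    rw [hh]
    rw [sum_exp_factor w hw1 a lam j]
    have hq0 : 0 ≤ w j a := hw j a
    have hq1 : w j a ≤ 1 := by
      rw [← hw1 j]
      exact Finset.single_le_sum (fun b _ => hw j b) (Finset.mem_univ a)
    have he : Real.exp lam - 1 ≤ lam + lam^2 := by
      have := exp_le_quadratic (x := lam) (by rw [abs_of_pos hlam0]; exact hlam1)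
      linarith
    have h1 : 1 + w j a * (Real.exp lam - 1) ≤ 1 + (w j a * lam + lam^2) := by
      nlinarith [Real.exp_pos lam, Real.add_one_le_exp lam]
    exact h1.trans (by linarith [Real.add_one_le_exp (w j a * lam + lam^2)])
  have hprod : ∏ j, ∑ b, w j b * Real.exp (h b) ≤
      Real.exp (∑ j : Fin k, (w j a * lam + lam^2)) := by
    rw [Real.exp_sum]
    refine Finset.prod_le_prod (fun j _ => ?_) (fun j _ => hfac j)
    refine Finset.sum_nonneg fun b _ => mul_nonneg (hw j b) (Real.exp_pos _).le
  calc Real.exp (-(lam * ((pa + t) * k))) * ∏ j, ∑ b, w j b * Real.exp (h b)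
      ≤ Real.exp (-(lam * ((pa + t) * k))) *
          Real.exp (∑ j : Fin k, (w j a * lam + lam^2)) :=
        mul_le_mul_of_nonneg_left hprod (Real.exp_pos _).le
    _ = Real.exp (-(lam * ((pa + t) * k)) + ∑ j : Fin k, (w j a * lam + lam^2)) :=
        (Real.exp_add _ _).symm
    _ ≤ Real.exp (-(k * (t^2/16))) := by
        apply Real.exp_le_exp.mpr
        have hsum : ∑ j : Fin k, (w j a * lam + lam^2) ≤
            k * ((pa + t/2) * lam + lam^2) := by
          calc ∑ j : Fin k, (w j a * lam + lam^2)
              ≤ ∑ j : Fin k, ((pa + t/2) * lam + lam^2) := by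
                refine Finset.sum_le_sum fun j _ => ?_
                have := abs_le.mp (hclose j)
                nlinarith
            _ = k * ((pa + t/2) * lam + lam^2) := by
                rw [Finset.sum_const, Finset.card_univ, Fintype.card_fin, nsmul_eq_mul]
        have key : -(lam * ((pa + t) * k)) + k * ((pa + t/2) * lam + lam^2)
            = -(k * (t^2/16)) := by rw [hlam]; ring
        linarith [hsum]

lemma tail_lower {k : ℕ} (w : Fin k → A → ℝ) (hw : ∀ j b, 0 ≤ w j b)
    (hw1 : ∀ j, ∑ b, w j b = 1) (a : A) (pa t : ℝ) (ht : 0 < t) (ht1 : t ≤ 1)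
    (hclose : ∀ j, |w j a - pa| ≤ t / 2) :
    ∑ x : Fin k → A, ({x : Fin k → A |
        ((Finset.univ.filter fun j => x j = a).card : ℝ) ≤ (pa - t) * k}).indicator
      (fun x => ∏ j, w j (x j)) x ≤ Real.exp (-(k * (t^2/16))) := by
  set lam := t/4 with hlam
  have hlam0 : 0 < lam := by positivity
  have hlam1 : lam ≤ 1 := by rw [hlam]; linarith
  set h : A → ℝ := fun b => if b = a then -lam else 0 with hh
  have hbound := chernoff_aux w hw h _ (-lam * ((pa - t) * k)) (fun x hx => by
    have hx' : ((Finset.univ.filter fun j => x j = a).card : ℝ) ≤ (pa - t) * k := hx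
    have hsum : ∑ j, h (x j) =
        ((Finset.univ.filter fun j => x j = a).card : ℝ) * (-lam) := by
      rw [hh]
      simp only []
      rw [Finset.sum_ite, Finset.sum_const, Finset.sum_const_zero, add_zero,
        nsmul_eq_mul]
    rw [hsum]
    nlinarith)
  refine hbound.trans ?_
  have hfac : ∀ j, ∑ b, w j b * Real.exp (h b) ≤ Real.exp (-(w j a * lam) + lam^2) := by
    intro j
    rw [hh]
    rw [sum_exp_factor w hw1 a (-lam) j]
    have hq0 : 0 ≤ w j a := hw j a
    have hq1 : w j a ≤ 1 := by
      rw [← hw1 j]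
      exact Finset.single_le_sum (fun b _ => hw j b) (Finset.mem_univ a)
    have he : Real.exp (-lam) - 1 ≤ -lam + lam^2 := by
      have := exp_le_quadratic (x := -lam) (by rw [abs_neg, abs_of_pos hlam0]; exact hlam1)
      nlinarith
    have h1 : 1 + w j a * (Real.exp (-lam) - 1) ≤ 1 + (-(w j a * lam) + lam^2) := by
      nlinarith [Real.exp_pos (-lam)]
    exact h1.trans (by linarith [Real.add_one_le_exp (-(w j a * lam) + lam^2)])
  have hprod : ∏ j, ∑ b, w j b * Real.exp (h b) ≤
      Real.exp (∑ j : Fin k, (-(w j a * lam) + lam^2)) := by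
    rw [Real.exp_sum]
    refine Finset.prod_le_prod (fun j _ => ?_) (fun j _ => hfac j)
    refine Finset.sum_nonneg fun b _ => mul_nonneg (hw j b) (Real.exp_pos _).le
  calc Real.exp (-(-lam * ((pa - t) * k))) * ∏ j, ∑ b, w j b * Real.exp (h b)
      ≤ Real.exp (-(-lam * ((pa - t) * k))) *
          Real.exp (∑ j : Fin k, (-(w j a * lam) + lam^2)) :=
        mul_le_mul_of_nonneg_left hprod (Real.exp_pos _).le
    _ = Real.exp (-(-lam * ((pa - t) * k)) + ∑ j : Fin k, (-(w j a * lam) + lam^2)) :=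
        (Real.exp_add _ _).symm
    _ ≤ Real.exp (-(k * (t^2/16))) := by
        apply Real.exp_le_exp.mpr
        have hsum : ∑ j : Fin k, (-(w j a * lam) + lam^2) ≤
            k * (-((pa - t/2) * lam) + lam^2) := by
          calc ∑ j : Fin k, (-(w j a * lam) + lam^2)
              ≤ ∑ j : Fin k, (-((pa - t/2) * lam) + lam^2) := by
                refine Finset.sum_le_sum fun j _ => ?_
                have := abs_le.mp (hclose j)
                nlinarith
            _ = k * (-((pa - t/2) * lam) + lam^2) := by
                rw [Finset.sum_const, Finset.card_univ, Fintype.card_fin, nsmul_eq_mul]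
        have key : -(-lam * ((pa - t) * k)) + k * (-((pa - t/2) * lam) + lam^2)
            = -(k * (t^2/16)) := by rw [hlam]; ring
        linarith [hsum]

lemma eventually_poly_le_rpow (N : ℕ) (c : ℝ) (hc : 0 < c) :
    ∀ᶠ k : ℕ in Filter.atTop, (Real.exp 1 * Real.sqrt k)^N ≤ (2:ℝ)^(c * (k:ℝ)) := by
  have hlog2 : (0:ℝ) < Real.log 2 := Real.log_pos (by norm_num)
  have hreal : ∀ᶠ x : ℝ in Filter.atTop, (Real.exp 1 * x)^N ≤ (2:ℝ)^(c * x) := by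
    have h1 : ∀ᶠ x : ℝ in Filter.atTop,
        ‖Real.log x‖ ≤ (c * Real.log 2 / (2 * (N+1))) * ‖x‖ :=
      Real.isLittleO_log_id_atTop.def (by positivity)
    have h2 : ∀ᶠ x : ℝ in Filter.atTop, (N:ℝ) ≤ (c * Real.log 2 / 2) * x := by
      filter_upwards [Filter.eventually_ge_atTop ((N:ℝ) / (c * Real.log 2 / 2))] with x hx
      rw [div_le_iff₀ (by positivity)] at hx
      linarith [hx]
    filter_upwards [h1, h2, Filter.eventually_ge_atTop (1:ℝ)] with x h1 h2 hx1
    have hx0 : (0:ℝ) < x := by linarith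
    have hlogx : 0 ≤ Real.log x := Real.log_nonneg hx1
    rw [Real.norm_eq_abs, Real.norm_eq_abs, abs_of_nonneg hlogx, abs_of_pos hx0] at h1
    have key : (N:ℝ) * (1 + Real.log x) ≤ Real.log 2 * (c * x) := by
      have hN : (N:ℝ) * Real.log x ≤ (c * Real.log 2 / 2) * x := by
        have hstep : (N:ℝ) * Real.log x ≤ (N:ℝ) * ((c * Real.log 2 / (2 * (N+1))) * x) :=
          mul_le_mul_of_nonneg_left h1 (Nat.cast_nonneg N)
        refine hstep.trans ?_
        have hNp : (0:ℝ) < (N:ℝ) + 1 := by positivity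
        have heq : (N:ℝ) * ((c * Real.log 2 / (2 * (N+1))) * x)
            = ((c * Real.log 2 / 2) * x) * ((N:ℝ)/((N:ℝ)+1)) := by
          field_simp
        rw [heq]
        have hfrac : (N:ℝ)/((N:ℝ)+1) ≤ 1 := by
          rw [div_le_one hNp]; linarith
        have hpos : 0 ≤ (c * Real.log 2 / 2) * x := by positivity
        nlinarith
      nlinarith
    have hex : (Real.exp 1 * x)^N = Real.exp ((N:ℝ) * (1 + Real.log x)) := by
      rw [Real.exp_nat_mul, Real.exp_add, Real.exp_log hx0]
    rw [hex, Real.rpow_def_of_pos (by norm_num : (0:ℝ) < 2)]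
    exact Real.exp_le_exp.mpr key
  have hcast := (tendsto_natCast_atTop_atTop (R := ℝ)).eventually hreal
  filter_upwards [hcast, Filter.eventually_ge_atTop 1] with k hk hk1
  have hk1' : (1:ℝ) ≤ (k:ℝ) := by exact_mod_cast hk1
  have hs : Real.sqrt (k:ℝ) ≤ (k:ℝ) := by
    have := Real.sqrt_le_sqrt (by nlinarith : (k:ℝ) ≤ (k:ℝ)^2)
    rwa [Real.sqrt_sq (by linarith)] at this
  refine le_trans ?_ hk
  exact pow_le_pow_left₀ (by positivity) (by nlinarith [Real.exp_pos 1]) N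

lemma eventually_const_le_exp (C c : ℝ) (hc : 0 < c) :
    ∀ᶠ k : ℕ in Filter.atTop, C ≤ Real.exp ((k:ℝ) * c) := by
  have : Filter.Tendsto (fun k : ℕ => Real.exp ((k:ℝ) * c)) Filter.atTop Filter.atTop :=
    Real.tendsto_exp_atTop.comp
      ((tendsto_natCast_atTop_atTop (R := ℝ)).atTop_mul_const hc)
  exact this.eventually_ge_atTop C

end AuxCT

end AuxCT

section EntCT

open Finset

lemma CT_entropy_eq {A : Type*} [Fintype A] (q : A → ℝ) :
    entropy q = (∑ a, Real.negMulLog (q a)) / Real.log 2 := by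
  rw [entropy, ← Finset.sum_neg_distrib, Finset.sum_div]
  refine Finset.sum_congr rfl fun a _ => ?_
  rw [Real.negMulLog, Real.logb]
  field_simp

lemma CT_entropy_continuous {A : Type*} [Fintype A] :
    Continuous (entropy : (A → ℝ) → ℝ) := by
  have h : (entropy : (A → ℝ) → ℝ) =
      fun q => (∑ a, Real.negMulLog (q a)) / Real.log 2 := funext CT_entropy_eq
  rw [h]
  exact (continuous_finset_sum _ fun a _ =>
    Real.continuous_negMulLog.comp (continuous_apply a)).div_const _

lemma CT_pow_entropy {A : Type*} [Fintype A] (k : ℕ) (hk : 0 < k) (m : A → ℕ)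
    (hm : ∑ a, m a = k) :
    (2:ℝ) ^ ((k:ℝ) * entropy (fun a => (m a : ℝ)/(k:ℝ))) * (∏ a, ((m a : ℝ))^(m a))
      = (k:ℝ)^k := by
  have hk0 : (0:ℝ) < (k:ℝ) := by exact_mod_cast hk
  have hP : (0:ℝ) < ∏ a, ((m a : ℝ))^(m a) := by
    refine Finset.prod_pos fun a _ => ?_
    rcases Nat.eq_zero_or_pos (m a) with h | h
    · simp [h]
    · exact pow_pos (by exact_mod_cast h) _
  have hL : (0:ℝ) < (2:ℝ) ^ ((k:ℝ) * entropy (fun a => (m a : ℝ)/(k:ℝ))) :=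
    Real.rpow_pos_of_pos (by norm_num) _
  have hR : (0:ℝ) < (k:ℝ)^k := pow_pos hk0 _
  rw [← Real.exp_log (mul_pos hL hP), ← Real.exp_log hR]
  congr 1
  rw [Real.log_mul hL.ne' hP.ne', Real.log_rpow (by norm_num), Real.log_pow, Real.log_prod
    (fun a _ => by
      rcases Nat.eq_zero_or_pos (m a) with h | h
      · simp [h]
      · exact (pow_pos (by exact_mod_cast h : (0:ℝ) < (m a : ℝ)) _).ne')]
  simp only [Real.log_pow]
  have hterm : ∀ a : A, (k:ℝ) * (((m a : ℝ)/(k:ℝ)) * Real.logb 2 ((m a : ℝ)/(k:ℝ)))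
      * Real.log 2 = (m a : ℝ) * Real.log (m a) - (m a : ℝ) * Real.log k := by
    intro a
    rcases Nat.eq_zero_or_pos (m a) with h | h
    · simp [h]
    · have hma : (0:ℝ) < (m a : ℝ) := by exact_mod_cast h
      rw [Real.logb, Real.log_div hma.ne' hk0.ne']
      have hl2 : Real.log 2 ≠ 0 := by
        have := Real.log_pos (by norm_num : (1:ℝ) < 2); linarith
      field_simp
  have hent : (k:ℝ) * entropy (fun a => (m a : ℝ)/(k:ℝ)) * Real.log 2
      = ∑ a, ((m a : ℝ) * Real.log k - (m a : ℝ) * Real.log (m a)) := by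
    rw [entropy, mul_neg, neg_mul, Finset.mul_sum, Finset.sum_mul, ← Finset.sum_neg_distrib]
    refine Finset.sum_congr rfl fun a _ => ?_
    have := hterm a
    linarith
  rw [hent]
  have hsub : ∑ a, ((m a : ℝ) * Real.log k - (m a : ℝ) * Real.log (m a))
      = (∑ a, (m a : ℝ)) * Real.log k - ∑ a, (m a : ℝ) * Real.log (m a) := by
    rw [Finset.sum_sub_distrib, Finset.sum_mul]
  rw [hsub]
  have hsum : (∑ a, (m a : ℝ)) = (k:ℝ) := by exact_mod_cast hm
  rw [hsum]
  ring

lemma CT_card_ge {A : Type*} [Fintype A] [DecidableEq A] (k : ℕ) (hk1 : 1 ≤ k)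
    (m : A → ℕ) (hm : ∑ a, m a = k) :
    (2:ℝ) ^ ((k:ℝ) * entropy (fun a => (m a : ℝ)/(k:ℝ))) ≤
      (Real.exp 1 * Real.sqrt k)^(Fintype.card A) *
      ((Finset.univ.filter fun x : Fin k → A =>
        ∀ a, (Finset.univ.filter fun j => x j = a).card = m a).card : ℝ) := by
  classical
  set K : ℝ := (k:ℝ) with hK
  have hK1 : (1:ℝ) ≤ K := by rw [hK]; exact_mod_cast hk1
  have hK0 : (0:ℝ) < K := by linarith
  have he1 : (1:ℝ) ≤ Real.exp 1 := by linarith [Real.add_one_le_exp 1, Real.exp_pos 1]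
  have he0 : (0:ℝ) < Real.exp 1 := Real.exp_pos 1
  have hsK1 : (1:ℝ) ≤ Real.sqrt K := Real.one_le_sqrt.mpr hK1
  set N := Fintype.card A with hN
  set Tc : ℝ := ((Finset.univ.filter fun x : Fin k → A =>
        ∀ a, (Finset.univ.filter fun j => x j = a).card = m a).card : ℝ) with hTc
  have hTc0 : 0 ≤ Tc := Nat.cast_nonneg _
  set P : ℝ := ∏ a, ((m a : ℝ))^(m a) with hP
  have hP0 : (0:ℝ) < P := by
    refine Finset.prod_pos fun a _ => ?_
    rcases Nat.eq_zero_or_pos (m a) with h | h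
    · simp [h]
    · exact pow_pos (by exact_mod_cast h) _
  have hC : ((k.factorial : ℝ)) ≤ (∏ a, ((m a).factorial : ℝ)) * Tc := by
    have := AuxCT.factorial_le_prod_mul_card k m hm
    rw [hTc]
    exact_mod_cast this
  have hU : (∏ a, ((m a).factorial : ℝ)) ≤
      (Real.exp 1 * Real.sqrt K)^N * (P / (Real.exp 1)^k) := by
    have hle : ∀ a ∈ Finset.univ, ((m a).factorial : ℝ) ≤
        Real.exp 1 * Real.sqrt K * (((m a : ℝ))/Real.exp 1)^(m a) := by
      intro a _
      have hma_le : m a ≤ k := hm ▸ Finset.single_le_sum (fun a _ => Nat.zero_le _)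
        (Finset.mem_univ a)
      rcases Nat.eq_zero_or_pos (m a) with h | h
      · simp only [h, Nat.factorial_zero, Nat.cast_one, Nat.cast_zero, pow_zero, mul_one]
        nlinarith
      · refine (AuxCT.factorial_le (m a) h).trans ?_
        have hsq : Real.sqrt (m a) ≤ Real.sqrt K := by
          refine Real.sqrt_le_sqrt ?_
          rw [hK]; exact_mod_cast hma_le
        have hpow0 : (0:ℝ) ≤ (((m a : ℝ))/Real.exp 1)^(m a) := by positivity
        have := mul_le_mul_of_nonneg_left hsq he0.le
        nlinarith [Real.sqrt_nonneg ((m a : ℝ))]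
    refine (Finset.prod_le_prod (fun a _ => Nat.cast_nonneg _) hle).trans_eq ?_
    rw [Finset.prod_mul_distrib, Finset.prod_const, Finset.card_univ]
    congr 1
    have hdp : ∀ a : A, (((m a : ℝ))/Real.exp 1)^(m a)
        = ((m a : ℝ))^(m a) / (Real.exp 1)^(m a) := fun a => div_pow _ _ _
    rw [Finset.prod_congr rfl (fun a _ => hdp a), Finset.prod_div_distrib, hP]
    congr 1
    rw [Finset.prod_pow_eq_pow_sum, hm]
  have hF := AuxCT.factorial_ge k hk1
  have h3 : (K/Real.exp 1)^k ≤ ((Real.exp 1 * Real.sqrt K)^N * (P / (Real.exp 1)^k)) * Tc :=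
    hF.trans (hC.trans (mul_le_mul_of_nonneg_right hU hTc0))
  have hek : (0:ℝ) < (Real.exp 1)^k := pow_pos he0 _
  have hKk : K^k ≤ (Real.exp 1 * Real.sqrt K)^N * P * Tc := by
    rw [div_pow, div_le_iff₀ hek] at h3
    calc K^k ≤ (Real.exp 1 * Real.sqrt K)^N * (P / (Real.exp 1)^k) * Tc * (Real.exp 1)^k :=
          h3
      _ = (Real.exp 1 * Real.sqrt K)^N * P * Tc := by
          field_simp
  have hid := CT_pow_entropy k (by omega) m hm
  rw [hK] at *
  have hmain : (2:ℝ) ^ ((k:ℝ) * entropy (fun a => (m a : ℝ)/(k:ℝ))) * P ≤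
      (Real.exp 1 * Real.sqrt (k:ℝ))^N * P * Tc := by
    rw [hP] at *
    rw [hid]
    exact hKk
  calc (2:ℝ) ^ ((k:ℝ) * entropy (fun a => (m a : ℝ)/(k:ℝ)))
      = (2:ℝ) ^ ((k:ℝ) * entropy (fun a => (m a : ℝ)/(k:ℝ))) * P / P := by
        field_simp
    _ ≤ (Real.exp 1 * Real.sqrt (k:ℝ))^N * P * Tc / P := by gcongr
    _ = (Real.exp 1 * Real.sqrt (k:ℝ))^N * Tc := by
        field_simp

end EntCT

/-- Concentration and type-counting (Lemma `lem: concentration`): for a nonsingular Doeblin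
Bernoulli shift with limiting marginal `p` and any `ε > 0`, there exist `δ > 0`, `k₀` and
`β > 0` such that for all `k > k₀`: (a) every denominator-`k` probability vector `q` with
`d_TV(q,p) < δ` has type class of size at least `2^{(H(p)-ε/2)k}`; and (b) for all but
finitely many `n`, `ρ_n^{⊕k}(Ĝ_{k,δ}) ≥ 1 - e^{-βk}`. -/


theorem concentration_of_types {A : Type*} [Fintype A] [DecidableEq A]
    [MeasurableSpace A] [MeasurableSingletonClass A]
    (ρ : ℤ → A → ℝ) (hρ : ∀ i, IsProbVec (ρ i))
    (μ : Measure (ℤ → A)) (hprod : IsProductMeasure μ ρ)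
    (hns : MeasEquiv (μ.map shift) μ)
    (hdoeblin : ∃ δ > 0, ∀ (i : ℤ) (b : A), δ < ρ i b)
    (p : A → ℝ) (hp : IsProbVec p)
    (hlim : ∀ b, Tendsto (fun i : ℤ => ρ i b) cofinite (𝓝 (p b)))
    (ε : ℝ) (hε : 0 < ε) :
    ∃ δ > (0 : ℝ), ∃ k₀ : ℕ, 0 < k₀ ∧ ∃ β > (0 : ℝ), ∀ k : ℕ, k₀ < k →
      (∀ q : A → ℝ, IsProbVec q → (∀ a, ∃ n : ℕ, q a = (n : ℝ) / k) → dTV q p < δ →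
        (2 : ℝ) ^ ((entropy p - ε / 2) * k) ≤ ((typeClass k q).ncard : ℝ)) ∧
      (∀ᶠ n in (cofinite : Filter ℤ),
        1 - Real.exp (-(β * k)) ≤
          blockProbSet ρ n {x : Fin k → A | dTV (emp x) p < δ}) := by
  classical
  clear hprod hns hdoeblin
  -- A is nonempty
  have hA : 0 < Fintype.card A := by
    rcases Nat.eq_zero_or_pos (Fintype.card A) with h0 | h
    · have : IsEmpty A := Fintype.card_eq_zero_iff.mp h0
      have h2 := hp.2
      rw [Finset.univ_eq_empty, Finset.sum_empty] at h2
      norm_num at h2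
    · exact h
  set N := Fintype.card A with hN
  have hN1 : (1:ℝ) ≤ (N:ℝ) := by exact_mod_cast hA
  -- entropy continuity at p
  obtain ⟨δ₁, hδ₁pos, hδ₁⟩ : ∃ δ₁ > 0, ∀ q : A → ℝ,
      dist q p < δ₁ → |entropy q - entropy p| < ε/4 := by
    have hc := (CT_entropy_continuous (A := A)).continuousAt (x := p)
    rw [Metric.continuousAt_iff] at hc
    obtain ⟨δ₁, hδ₁pos, h⟩ := hc (ε/4) (by positivity)
    exact ⟨δ₁, hδ₁pos, fun q hq => by simpa [Real.dist_eq] using h hq⟩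
  set δ : ℝ := min δ₁ 1 with hδdef
  have hδpos : 0 < δ := lt_min hδ₁pos one_pos
  have hδ1 : δ ≤ 1 := min_le_right _ _
  have hδδ₁ : δ ≤ δ₁ := min_le_left _ _
  set t : ℝ := δ / N with htdef
  have ht : 0 < t := by positivity
  have ht1 : t ≤ 1 := by
    rw [htdef, div_le_one (by positivity)]
    linarith
  set β : ℝ := t^2/32 with hβdef
  have hβpos : 0 < β := by positivity
  -- choose k₀
  have hev := (AuxCT.eventually_poly_le_rpow N (ε/4) (by positivity)).and
    ((AuxCT.eventually_const_le_exp (2*N) (t^2/32) (by positivity)).and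
      (Filter.eventually_ge_atTop 1))
  obtain ⟨k₀, hk₀⟩ := Filter.eventually_atTop.mp hev
  refine ⟨δ, hδpos, k₀ + 1, Nat.succ_pos _, β, hβpos, fun k hk => ?_⟩
  obtain ⟨hpoly, hexp2N, hk1⟩ := hk₀ k (by omega)
  have hk0 : 0 < k := hk1
  have hK0 : (0:ℝ) < (k:ℝ) := by exact_mod_cast hk0
  constructor
  · -- part (a)
    intro q hq hden hdtv
    choose m hm using hden
    have hq_eq : q = fun a => (m a : ℝ)/(k:ℝ) := funext hm
    have hksum : ∑ a, m a = k := by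
      have h1 : (∑ a, (m a : ℝ)) = (k:ℝ) := by
        have h2 : ∑ a, q a = 1 := hq.2
        rw [hq_eq] at h2
        rw [← Finset.sum_div] at h2
        field_simp at h2
        linarith
      exact_mod_cast h1
    -- identify the type class with the finset
    set T : Finset (Fin k → A) := Finset.univ.filter fun x : Fin k → A =>
        ∀ a, (Finset.univ.filter fun j => x j = a).card = m a with hT
    have hTset : typeClass k q = ↑T := by
      ext x
      simp only [typeClass, Set.mem_setOf_eq, hT, Finset.coe_filter, Finset.mem_univ,
        true_and, Set.mem_setOf_eq]
      constructor
      · intro hx a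
        have hthis := hx a
        rw [emp, hm a] at hthis
        rw [div_eq_div_iff hK0.ne' hK0.ne'] at hthis
        exact_mod_cast mul_right_cancel₀ hK0.ne' hthis
      · intro hx a
        rw [emp, hx a, hm a]
    rw [hTset, Set.ncard_coe_finset]
    -- entropy of q is close to entropy of p
    have hdistqp : dist q p < δ₁ := by
      have hd : dist q p ≤ dTV q p := by
        refine (dist_pi_le_iff ?_).mpr fun a => ?_
        · rw [dTV]; positivity
        · rw [Real.dist_eq, dTV]
          exact Finset.single_le_sum (f := fun a => |q a - p a|)
            (fun a _ => abs_nonneg _) (Finset.mem_univ a)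
      calc dist q p ≤ dTV q p := hd
        _ < δ := hdtv
        _ ≤ δ₁ := hδδ₁
    have hHq : entropy p - ε/4 ≤ entropy q := by
      have := abs_lt.mp (hδ₁ q hdistqp)
      linarith [this.1]
    -- cardinality bound
    have hcard := CT_card_ge k hk1 m hksum
    rw [← hq_eq] at hcard
    have hEN : (0:ℝ) < (Real.exp 1 * Real.sqrt (k:ℝ))^N := by
      have : (0:ℝ) < Real.exp 1 * Real.sqrt (k:ℝ) := by
        have : (0:ℝ) < Real.sqrt (k:ℝ) := Real.sqrt_pos.mpr hK0
        positivity
      positivity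
    have hstep : (2:ℝ)^((entropy p - ε/2) * (k:ℝ)) * (Real.exp 1 * Real.sqrt (k:ℝ))^N ≤
        (Real.exp 1 * Real.sqrt (k:ℝ))^N * (T.card : ℝ) := by
      calc (2:ℝ)^((entropy p - ε/2) * (k:ℝ)) * (Real.exp 1 * Real.sqrt (k:ℝ))^N
          ≤ (2:ℝ)^((entropy p - ε/2) * (k:ℝ)) * (2:ℝ)^((ε/4) * (k:ℝ)) := by
            refine mul_le_mul_of_nonneg_left hpoly ?_
            positivity
        _ = (2:ℝ)^((entropy p - ε/2) * (k:ℝ) + (ε/4) * (k:ℝ)) :=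
            (Real.rpow_add (by norm_num) _ _).symm
        _ ≤ (2:ℝ)^((k:ℝ) * entropy q) := by
            refine Real.rpow_le_rpow_of_exponent_le (by norm_num) ?_
            have : (entropy p - ε/2) * (k:ℝ) + (ε/4) * (k:ℝ)
                = (entropy p - ε/4) * (k:ℝ) := by ring
            rw [this]
            calc (entropy p - ε/4) * (k:ℝ) ≤ entropy q * (k:ℝ) := by
                  exact mul_le_mul_of_nonneg_right hHq hK0.le
              _ = (k:ℝ) * entropy q := mul_comm _ _
        _ ≤ (Real.exp 1 * Real.sqrt (k:ℝ))^N * (T.card : ℝ) := hcard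
    have := (mul_le_mul_iff_of_pos_right hEN).mp (by
      calc (2:ℝ)^((entropy p - ε/2) * (k:ℝ)) * (Real.exp 1 * Real.sqrt (k:ℝ))^N
          ≤ (Real.exp 1 * Real.sqrt (k:ℝ))^N * (T.card : ℝ) := hstep
        _ = (T.card : ℝ) * (Real.exp 1 * Real.sqrt (k:ℝ))^N := mul_comm _ _)
    exact this
  · -- part (b)
    have hsingle : ∀ a : A, ∀ᶠ i : ℤ in Filter.cofinite, |ρ i a - p a| ≤ t/2 := by
      intro a
      have := Metric.tendsto_nhds.mp (hlim a) (t/2) (by positivity)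
      filter_upwards [this] with i hi
      rw [Real.dist_eq] at hi
      exact hi.le
    have hall : ∀ᶠ i : ℤ in Filter.cofinite, ∀ a : A, |ρ i a - p a| ≤ t/2 :=
      Filter.eventually_all.mpr hsingle
    have hwin : ∀ᶠ n : ℤ in Filter.cofinite, ∀ j : Fin k, ∀ a : A,
        |ρ (n + (j.val : ℤ)) a - p a| ≤ t/2 := by
      rw [Filter.eventually_all]
      intro j
      exact (add_left_injective ((j.val : ℤ))).tendsto_cofinite.eventually hall
    filter_upwards [hwin] with n hn
    set w : Fin k → A → ℝ := fun j => ρ (n + (j.val : ℤ)) with hw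
    have hw0 : ∀ j b, 0 ≤ w j b := fun j b => (hρ _).1 b
    have hw1 : ∀ j, ∑ b, w j b = 1 := fun j => (hρ _).2
    have hclose : ∀ a : A, ∀ j : Fin k, |w j a - p a| ≤ t/2 := fun a j => hn j a
    set f : (Fin k → A) → ℝ := fun x => ∏ j, w j (x j) with hf
    have hf0 : ∀ x, 0 ≤ f x := fun x => Finset.prod_nonneg fun j _ => hw0 j (x j)
    have hblock : ∀ (V : Set (Fin k → A)),
        blockProbSet ρ n V = ∑ x : Fin k → A, V.indicator f x := by
      intro V
      rfl
    have htotal : ∑ x : Fin k → A, f x = 1 := by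
      have hps := Finset.prod_univ_sum (fun _ : Fin k => (Finset.univ : Finset A))
        (fun j b => w j b)
      rw [Fintype.piFinset_univ] at hps
      rw [hf, ← hps]
      rw [Finset.prod_congr rfl fun j _ => hw1 j, Finset.prod_const_one]
    set G : Set (Fin k → A) := {x : Fin k → A | dTV (emp x) p < δ} with hG
    -- split of total mass
    have hsplit : ∑ x : Fin k → A, G.indicator f x
        = 1 - ∑ x : Fin k → A, Gᶜ.indicator f x := by
      have hpt : ∀ x : Fin k → A, G.indicator f x + Gᶜ.indicator f x = f x := by
        intro x
        by_cases hx : x ∈ G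
        · rw [Set.indicator_of_mem hx, Set.indicator_of_notMem (by simp [hx]), add_zero]
        · rw [Set.indicator_of_notMem hx, Set.indicator_of_mem (by simp [hx]), zero_add]
      have := Finset.sum_congr rfl (fun x (_ : x ∈ Finset.univ) => (hpt x).symm)
      rw [htotal] at this
      rw [Finset.sum_add_distrib] at this
      linarith [this]
    -- union bound on the complement
    set U : A → Set (Fin k → A) := fun a => {x : Fin k → A |
        (p a + t) * k ≤ ((Finset.univ.filter fun j => x j = a).card : ℝ)} with hU
    set L : A → Set (Fin k → A) := fun a => {x : Fin k → A |
        ((Finset.univ.filter fun j => x j = a).card : ℝ) ≤ (p a - t) * k} with hL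
    have hptwise : ∀ x : Fin k → A, Gᶜ.indicator f x ≤
        ∑ a, ((U a).indicator f x + (L a).indicator f x) := by
      intro x
      have hnonneg : ∀ a ∈ Finset.univ, 0 ≤ (U a).indicator f x + (L a).indicator f x :=
        fun a _ => add_nonneg (Set.indicator_nonneg (fun y _ => hf0 y) x)
          (Set.indicator_nonneg (fun y _ => hf0 y) x)
      by_cases hx : x ∈ Gᶜ
      · rw [Set.indicator_of_mem hx]
        have hxG : ¬ (dTV (emp x) p < δ) := hx
        push_neg at hxG
        -- there is a with |emp x a - p a| ≥ t
        have hex : ∃ a : A, t ≤ |emp x a - p a| := by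
          by_contra hcon
          push_neg at hcon
          have hlt : dTV (emp x) p < ∑ _a : A, t := by
            rw [dTV]
            refine Finset.sum_lt_sum_of_nonempty ?_ fun a _ => hcon a
            exact Finset.univ_nonempty_iff.mpr (Fintype.card_pos_iff.mp hA)
          rw [Finset.sum_const, Finset.card_univ, nsmul_eq_mul] at hlt
          have : (N:ℝ) * t = δ := by
            rw [htdef]
            field_simp
          rw [← hN] at hlt
          rw [this] at hlt
          exact absurd hxG (not_le.mpr hlt)
        obtain ⟨a, ha⟩ := hex
        have hmem : x ∈ U a ∪ L a := by
          rcases le_or_gt t (emp x a - p a) with hcase | hcase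
          · left
            rw [hU]
            simp only [Set.mem_setOf_eq]
            have hemp : emp x a = ((Finset.univ.filter fun j => x j = a).card : ℝ)/(k:ℝ) :=
              rfl
            rw [hemp] at hcase
            have := mul_le_mul_of_nonneg_right (by linarith :
              p a + t ≤ ((Finset.univ.filter fun j => x j = a).card : ℝ)/(k:ℝ)) hK0.le
            rw [div_mul_cancel₀ _ hK0.ne'] at this
            linarith
          · right
            rw [hL]
            simp only [Set.mem_setOf_eq]
            have habs : t ≤ -(emp x a - p a) := by
              rcases abs_cases (emp x a - p a) with ⟨heq, _⟩ | ⟨heq, _⟩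
              · rw [heq] at ha; linarith
              · rw [heq] at ha; linarith
            have hemp : emp x a = ((Finset.univ.filter fun j => x j = a).card : ℝ)/(k:ℝ) :=
              rfl
            rw [hemp] at habs
            have := mul_le_mul_of_nonneg_right (by linarith :
              ((Finset.univ.filter fun j => x j = a).card : ℝ)/(k:ℝ) ≤ p a - t) hK0.le
            rw [div_mul_cancel₀ _ hK0.ne'] at this
            linarith
        have hterm : f x ≤ (U a).indicator f x + (L a).indicator f x := by
          rcases hmem with hm | hm
          · rw [Set.indicator_of_mem hm]
            have : 0 ≤ (L a).indicator f x := Set.indicator_nonneg (fun y _ => hf0 y) x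
            linarith
          · rw [Set.indicator_of_mem (s := L a) hm]
            have : 0 ≤ (U a).indicator f x := Set.indicator_nonneg (fun y _ => hf0 y) x
            linarith
        exact hterm.trans (Finset.single_le_sum hnonneg (Finset.mem_univ a))
      · rw [Set.indicator_of_notMem hx]
        exact Finset.sum_nonneg hnonneg
    have hbad : ∑ x : Fin k → A, Gᶜ.indicator f x ≤
        (2*N : ℝ) * Real.exp (-((k:ℝ) * (t^2/16))) := by
      calc ∑ x : Fin k → A, Gᶜ.indicator f x
          ≤ ∑ x : Fin k → A, ∑ a, ((U a).indicator f x + (L a).indicator f x) :=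
            Finset.sum_le_sum fun x _ => hptwise x
        _ = ∑ a, ∑ x : Fin k → A, ((U a).indicator f x + (L a).indicator f x) :=
            Finset.sum_comm
        _ ≤ ∑ _a : A, (Real.exp (-((k:ℝ) * (t^2/16))) + Real.exp (-((k:ℝ) * (t^2/16)))) := by
            refine Finset.sum_le_sum fun a _ => ?_
            rw [Finset.sum_add_distrib]
            have hUa := AuxCT.tail_upper w hw0 hw1 a (p a) t ht ht1 (hclose a)
            have hLa := AuxCT.tail_lower w hw0 hw1 a (p a) t ht ht1 (hclose a)
            exact add_le_add hUa hLa
        _ = (2*N : ℝ) * Real.exp (-((k:ℝ) * (t^2/16))) := by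
            rw [Finset.sum_const, Finset.card_univ, nsmul_eq_mul, ← hN]
            ring
    have hsmall : (2*N : ℝ) * Real.exp (-((k:ℝ) * (t^2/16))) ≤ Real.exp (-(β * (k:ℝ))) := by
      have hsplit2 : Real.exp (-((k:ℝ) * (t^2/16)))
          = Real.exp (-((k:ℝ) * (t^2/32))) * Real.exp (-((k:ℝ) * (t^2/32))) := by
        rw [← Real.exp_add]
        congr 1
        ring
      have h2N : (2*N : ℝ) * Real.exp (-((k:ℝ) * (t^2/32))) ≤ 1 := by
        have hE := hexp2N
        have hpos : (0:ℝ) < Real.exp ((k:ℝ) * (t^2/32)) := Real.exp_pos _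
        rw [Real.exp_neg]
        rw [mul_inv_le_iff₀ hpos, one_mul]
        exact hE
      have hβk : -(β * (k:ℝ)) = -((k:ℝ) * (t^2/32)) := by rw [hβdef]; ring
      rw [hβk, hsplit2, ← mul_assoc]
      nlinarith [Real.exp_pos (-((k:ℝ) * (t^2/32))),
        (Real.exp_pos (-((k:ℝ) * (t^2/32)))).le]
    rw [hblock G, hsplit]
    have : ∑ x : Fin k → A, Gᶜ.indicator f x ≤ Real.exp (-(β * (k:ℝ))) :=
      hbad.trans hsmall
    linarith
end

section
/- Let A be a finite set and ρ = ⊗_{n∈ℤ} ρ_n a product probability measure on A^ℤ satisfying the Doeblin condition. For n ∈ ℤ⁺ define g_n: A^ℤ → ℝ by g_n(x) = (1/n) log₂ ρ([x]_n) + (1/n) ∑_{k=1}^n H(ρ_k), where [x]_n = {y ∈ A^ℤ : y_k = x_k for 1 ≤ k ≤ n} and H(ρ_k) = −∑_{a∈A} ρ_k(a) log₂ ρ_k(a). Then g_n converges to 0 in measure with respect to ρ: for every ε > 0, ρ(|g_n| > ε) → 0 as n → ∞. -/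
/-
Since `μ([x]_n) = ∏_{k=1}^n ρ_k(x_k)`, `n · g_n(x)` is the sum of the independent centred
variables `log₂ ρ_k(x_k) + H(ρ_k)`. The Doeblin bound `δ < ρ_k ≤ 1` bounds the variance of each
by `(log₂ δ)²`, so Chebyshev's inequality gives `μ(|g_n| > ε) ≤ (log₂ δ)² / (ε² n)`.
-/

open MeasureTheory Filter Set Topology

/-- `g_n(x) = (1/n) log₂ μ([x]_n) + (1/n) ∑_{k=1}^n H(ρ_k)`, where `[x]_n` is the cylinder
on coordinates `1, …, n`. -/
noncomputable def shannonErr {A : Type*} [Fintype A] [MeasurableSpace A]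
    (μ : Measure (ℤ → A)) (ρ : ℤ → A → ℝ) (n : ℕ) (x : ℤ → A) : ℝ :=
  Real.logb 2 ((μ {y | ∀ k ∈ Finset.Icc (1 : ℤ) (n : ℤ), y k = x k}).toReal) / n +
    (∑ k ∈ Finset.Icc (1 : ℤ) (n : ℤ), entropy (ρ k)) / n

section ProductWeights

variable {ι A : Type*} [Fintype ι] [DecidableEq ι] [Fintype A]

theorem sum_prod_mul_prod (p g : ι → A → ℝ) :
    ∑ w : ι → A, (∏ i, p i (w i)) * ∏ i, g i (w i) = ∏ i, ∑ a, p i a * g i a := by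
  simp_rw [← Finset.prod_mul_distrib]
  exact (Fintype.prod_sum fun i a => p i a * g i a).symm

/-- Bienaymé's identity for independent centred coordinates. -/
theorem sum_prod_mul_sum_sq {p : ι → A → ℝ} (hp : ∀ i, ∑ a, p i a = 1) {Y : ι → A → ℝ}
    (hY : ∀ i, ∑ a, p i a * Y i a = 0) :
    ∑ w : ι → A, (∏ i, p i (w i)) * (∑ i, Y i (w i)) ^ 2 = ∑ i, ∑ a, p i a * Y i a ^ 2 := by
  have covariance : ∀ j k, ∑ w : ι → A, (∏ i, p i (w i)) * (Y j (w j) * Y k (w k)) =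
      if j = k then ∑ a, p j a * Y j a ^ 2 else 0 := by
    intro j k
    have split : ∀ w : ι → A, Y j (w j) * Y k (w k) =
        ∏ i, (if i = j then Y j (w i) else 1) * (if i = k then Y k (w i) else 1) := by
      intro w
      rw [Finset.prod_mul_distrib, Fintype.prod_ite_eq' j (fun i => Y j (w i)),
        Fintype.prod_ite_eq' k (fun i => Y k (w i))]
    simp_rw [split]
    rw [sum_prod_mul_prod p fun i a => (if i = j then Y j a else 1) * (if i = k then Y k a else 1)]
    split_ifs with hjk
    · subst hjk
      rw [Fintype.prod_eq_single j fun i hi => by simp [hi, hp]]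
      simp [sq]
    · exact Finset.prod_eq_zero (Finset.mem_univ j) (by simp [hjk, hY])
  calc ∑ w : ι → A, (∏ i, p i (w i)) * (∑ i, Y i (w i)) ^ 2
      = ∑ j, ∑ k, ∑ w : ι → A, (∏ i, p i (w i)) * (Y j (w j) * Y k (w k)) := by
        simp_rw [sq, Finset.sum_mul_sum, Finset.mul_sum]
        rw [Finset.sum_comm]
        refine Finset.sum_congr rfl fun j _ => Finset.sum_comm
    _ = ∑ i, ∑ a, p i a * Y i a ^ 2 := by simp [covariance]

end ProductWeights

theorem sum_filter_lt_abs_le {α : Type*} (s : Finset α) {P S : α → ℝ} (hP : ∀ w ∈ s, 0 ≤ P w)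
    {t : ℝ} (ht : 0 < t) :
    ∑ w ∈ s with t < |S w|, P w ≤ (∑ w ∈ s, P w * S w ^ 2) / t ^ 2 := by
  rw [le_div_iff₀ (by positivity), Finset.sum_mul]
  calc ∑ w ∈ s with t < |S w|, P w * t ^ 2
      ≤ ∑ w ∈ s with t < |S w|, P w * S w ^ 2 := by
        refine Finset.sum_le_sum fun w hw => ?_
        rw [Finset.mem_filter] at hw
        have : t ^ 2 ≤ S w ^ 2 := by
          rw [← sq_abs (S w)]; exact pow_le_pow_left₀ ht.le hw.2.le 2
        exact mul_le_mul_of_nonneg_left this (hP w hw.1)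
    _ ≤ ∑ w ∈ s, P w * S w ^ 2 :=
        Finset.sum_le_sum_of_subset_of_nonneg (Finset.filter_subset _ s)
          fun w hw _ => mul_nonneg (hP w hw) (sq_nonneg _)

namespace IsProbVec

variable {A : Type*} [Fintype A] {p : A → ℝ}

theorem nonempty_s16 (hp : IsProbVec p) : Nonempty A := by
  rcases isEmpty_or_nonempty A with h | h
  · simpa using hp.2
  · exact h

theorem sum_mul_sub_mean_eq_zero (hp : IsProbVec p) (f : A → ℝ) :
    ∑ a, p a * (f a - ∑ b, p b * f b) = 0 := by
  simp_rw [mul_sub, Finset.sum_sub_distrib, ← Finset.sum_mul, hp.2, one_mul, sub_self]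

theorem sum_mul_sub_mean_sq_le (hp : IsProbVec p) (f : A → ℝ) :
    ∑ a, p a * (f a - ∑ b, p b * f b) ^ 2 ≤ ∑ a, p a * f a ^ 2 := by
  set m := ∑ b, p b * f b
  have expand : ∀ a, p a * (f a - m) ^ 2 = p a * f a ^ 2 - 2 * m * (p a * f a) + m ^ 2 * p a :=
    fun a => by ring
  simp_rw [expand, Finset.sum_add_distrib, Finset.sum_sub_distrib, ← Finset.mul_sum, hp.2]
  nlinarith [sq_nonneg m]

theorem sum_mul_logb_sq_le (hp : IsProbVec p) {δ : ℝ} (hδ : 0 < δ) (hδp : ∀ a, δ < p a) :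
    ∑ a, p a * Real.logb 2 (p a) ^ 2 ≤ Real.logb 2 δ ^ 2 := by
  have hp1 : ∀ a, p a ≤ 1 := fun a =>
    hp.2 ▸ Finset.single_le_sum (fun b _ => hp.1 b) (Finset.mem_univ a)
  calc ∑ a, p a * Real.logb 2 (p a) ^ 2 ≤ ∑ a, p a * Real.logb 2 δ ^ 2 := by
        refine Finset.sum_le_sum fun a _ => mul_le_mul_of_nonneg_left ?_ (hp.1 a)
        have hlo := Real.logb_le_logb_of_le one_lt_two hδ (hδp a).le
        have hhi := Real.logb_nonpos one_lt_two (hp.1 a) (hp1 a)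
        nlinarith
    _ = Real.logb 2 δ ^ 2 := by rw [← Finset.sum_mul, hp.2, one_mul]

end IsProbVec

namespace IsProductMeasure

variable {A : Type*} [MeasurableSpace A] {μ : Measure (ℤ → A)} {ρ : ℤ → A → ℝ}

theorem measure_restrict_preimage_singleton_s16 [Nonempty A] (hprod : IsProductMeasure μ ρ)
    (s : Finset ℤ) (w : s → A) :
    μ (s.restrict ⁻¹' ({w} : Set (s → A))) = ∏ i : s, ENNReal.ofReal (ρ i (w i)) := by
  set y : ℤ → A := Function.extend Subtype.val w fun _ => Classical.arbitrary A
  have hy : ∀ i : s, y i = w i := Subtype.val_injective.extend_apply _ _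
  have : s.restrict ⁻¹' ({w} : Set (s → A)) = _root_.cylinder s y := by
    ext x
    simp [_root_.cylinder, funext_iff, ← hy]
  rw [this, hprod, ← Finset.prod_coe_sort]
  simp only [hy]

theorem measure_restrict_preimage [MeasurableSingletonClass A] [Nonempty A]
    (hprod : IsProductMeasure μ ρ) (hρ : ∀ i a, 0 ≤ ρ i a) (s : Finset ℤ) (E : Finset (s → A)) :
    μ (s.restrict ⁻¹' (E : Set (s → A))) = ENNReal.ofReal (∑ w ∈ E, ∏ i : s, ρ i (w i)) := by
  rw [← sum_measure_preimage_singleton E fun w _ =>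
      s.measurable_restrict (measurableSet_singleton w),
    ENNReal.ofReal_sum_of_nonneg fun w _ => Finset.prod_nonneg fun (i : s) _ => hρ i (w i)]
  refine Finset.sum_congr rfl fun w _ => ?_
  rw [ENNReal.ofReal_prod_of_nonneg fun (i : s) _ => hρ i (w i)]
  exact hprod.measure_restrict_preimage_singleton_s16 s w

theorem measure_lt_abs_sum_le [Fintype A] [MeasurableSingletonClass A]
    (hprod : IsProductMeasure μ ρ) (hρ : ∀ i, IsProbVec (ρ i)) {Y : ℤ → A → ℝ}
    (hY : ∀ i, ∑ a, ρ i a * Y i a = 0) (s : Finset ℤ) {t : ℝ} (ht : 0 < t) :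
    μ {x | t < |∑ i ∈ s, Y i (x i)|} ≤
      ENNReal.ofReal ((∑ i ∈ s, ∑ a, ρ i a * Y i a ^ 2) / t ^ 2) := by
  have := (hρ 0).nonempty_s16
  have hset : {x : ℤ → A | t < |∑ i ∈ s, Y i (x i)|} = s.restrict ⁻¹'
      ((Finset.univ.filter fun w : s → A => t < |∑ i : s, Y i (w i)|) : Set (s → A)) := by
    ext x
    simp only [Set.mem_ofPred_eq, Set.mem_preimage, Finset.coe_filter, Finset.mem_univ, true_and,
      Finset.restrict]
    rw [Finset.sum_coe_sort s fun i => Y i (x i)]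
  rw [hset, hprod.measure_restrict_preimage (fun i => (hρ i).1) s]
  refine ENNReal.ofReal_le_ofReal ((sum_filter_lt_abs_le _
    (fun w _ => Finset.prod_nonneg fun (i : s) _ => (hρ i).1 (w i)) ht).trans_eq ?_)
  rw [sum_prod_mul_sum_sq (p := fun (i : s) => ρ i) (fun i => (hρ i).2) (fun i => hY i),
    Finset.sum_coe_sort s fun i => ∑ a, ρ i a * Y i a ^ 2]

end IsProductMeasure

theorem shannonErr_eq {A : Type*} [Fintype A] [MeasurableSpace A] {μ : Measure (ℤ → A)}
    {ρ : ℤ → A → ℝ} (hprod : IsProductMeasure μ ρ) (hρ : ∀ i a, 0 < ρ i a) (n : ℕ)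
    (x : ℤ → A) :
    shannonErr μ ρ n x = (∑ k ∈ Finset.Icc (1 : ℤ) n,
      (Real.logb 2 (ρ k (x k)) - ∑ a, ρ k a * Real.logb 2 (ρ k a))) / n := by
  have hcyl := hprod (Finset.Icc 1 n) x
  rw [_root_.cylinder] at hcyl
  rw [shannonErr, hcyl, ENNReal.toReal_prod]
  simp only [ENNReal.toReal_ofReal (hρ _ _).le]
  rw [Real.logb_prod _ _ fun k _ => (hρ k (x k)).ne', ← add_div, ← Finset.sum_add_distrib]
  simp only [entropy, sub_eq_add_neg]

theorem measure_lt_abs_shannonErr_le {A : Type*} [Fintype A] [MeasurableSpace A]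
    [MeasurableSingletonClass A] {ρ : ℤ → A → ℝ} (hρ : ∀ i, IsProbVec (ρ i)) {δ : ℝ}
    (hδ : 0 < δ) (hδρ : ∀ i b, δ < ρ i b) {μ : Measure (ℤ → A)} (hprod : IsProductMeasure μ ρ)
    {ε : ℝ} (hε : 0 < ε) {n : ℕ} (hn : 0 < n) :
    μ {x | ε < |shannonErr μ ρ n x|} ≤ ENNReal.ofReal (Real.logb 2 δ ^ 2 / ε ^ 2 / n) := by
  set Y : ℤ → A → ℝ := fun i a => Real.logb 2 (ρ i a) - ∑ b, ρ i b * Real.logb 2 (ρ i b)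
  have hY : ∀ i, ∑ a, ρ i a * Y i a = 0 := fun i => (hρ i).sum_mul_sub_mean_eq_zero _
  have hvar : ∀ i, ∑ a, ρ i a * Y i a ^ 2 ≤ Real.logb 2 δ ^ 2 := fun i =>
    ((hρ i).sum_mul_sub_mean_sq_le _).trans ((hρ i).sum_mul_logb_sq_le hδ (hδρ i))
  have hn' : (0 : ℝ) < n := by exact_mod_cast hn
  have hvar_sum : ∑ i ∈ Finset.Icc (1 : ℤ) n, ∑ a, ρ i a * Y i a ^ 2 ≤ n * Real.logb 2 δ ^ 2 := by
    simpa using Finset.sum_le_card_nsmul (Finset.Icc (1 : ℤ) n) _ _ fun i _ => hvar i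
  calc μ {x | ε < |shannonErr μ ρ n x|}
      = μ {x | ε * n < |∑ i ∈ Finset.Icc (1 : ℤ) n, Y i (x i)|} := by
        simp_rw [shannonErr_eq hprod (fun i a => hδ.trans (hδρ i a)), abs_div, Nat.abs_cast,
          lt_div_iff₀ hn']
        rfl
    _ ≤ ENNReal.ofReal ((∑ i ∈ Finset.Icc (1 : ℤ) n, ∑ a, ρ i a * Y i a ^ 2) / (ε * n) ^ 2) :=
        hprod.measure_lt_abs_sum_le hρ hY _ (by positivity)
    _ ≤ ENNReal.ofReal (n * Real.logb 2 δ ^ 2 / (ε * n) ^ 2) := by gcongr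
    _ = ENNReal.ofReal (Real.logb 2 δ ^ 2 / ε ^ 2 / n) := by congr 1; field_simp

/-- Shannon's theorem for Doeblin product measures: `g_n → 0` in `ρ`-measure. -/
theorem shannon_in_measure {A : Type*} [Fintype A]
    [MeasurableSpace A] [MeasurableSingletonClass A]
    (ρ : ℤ → A → ℝ) (hρ : ∀ i, IsProbVec (ρ i))
    (hdoeblin : ∃ δ > 0, ∀ (i : ℤ) (b : A), δ < ρ i b)
    (μ : Measure (ℤ → A)) (hprod : IsProductMeasure μ ρ)
    (ε : ℝ) (hε : 0 < ε) :
    Tendsto (fun n : ℕ => μ {x | ε < |shannonErr μ ρ n x|}) atTop (𝓝 0) := by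
  obtain ⟨δ, hδ, hδρ⟩ := hdoeblin
  have hlim := ENNReal.tendsto_ofReal (tendsto_const_div_atTop_nhds_zero_nat
    (Real.logb 2 δ ^ 2 / ε ^ 2))
  rw [ENNReal.ofReal_zero] at hlim
  exact tendsto_of_tendsto_of_tendsto_of_le_of_le' tendsto_const_nhds hlim
    (Eventually.of_forall fun _ => bot_le)
    ((eventually_gt_atTop 0).mono fun n hn => measure_lt_abs_shannonErr_le hρ hδ hδρ hprod hε hn)
end
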